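/- arXiv:1301.5740 — 7 statements merged into one kernel-verified Lean document; each statement's English description precedes it below -/
import Mathlib

section
/- Let 𝕋 be a triangulated category with a projective class (𝒫, ℐ), and let X → Y → Z → ΣX be a distinguished triangle where X has length k, Y has length n, Z has length l with respect to (𝒫, ℐ), and the connecting map Z → ΣX lies in the m-th power ideal ℐ^m with m ≤ l. Then n ≤ max(k − m + l, l). -/
open CategoryTheory Limits Pretriangulated

universe v u

variable (C : Type u) [Category.{v} C] [Preadditive C] [HasZeroObject C] [HasShift C ℤ]
  [∀ n : ℤ, (CategoryTheory.shiftFunctor C n).Additive] [Pretriangulated C]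

/-- A projective class in a triangulated category: a class of objects `P` and an
ideal of morphisms `I` determining each other by orthogonality, such that every object
sits in a distinguished triangle `P' → X → Y → ΣP'` with `P' ∈ P` and `X → Y` in `I`. -/
structure ProjClass where
  P : Set C
  I : CategoryTheory.MorphismProperty C
  P_iff : ∀ X : C, X ∈ P ↔ ∀ ⦃Y Z : C⦄ (g : Y ⟶ Z), I g → ∀ f : X ⟶ Y, f ≫ g = 0
  I_iff : ∀ ⦃Y Z : C⦄ (g : Y ⟶ Z), I g ↔ ∀ (P' : C), P' ∈ P → ∀ f : P' ⟶ Y, f ≫ g = 0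
  exists_triangle : ∀ X : C, ∃ (P' Y : C) (f : P' ⟶ X) (g : X ⟶ Y) (h : Y ⟶ P'⟦(1 : ℤ)⟧),
    P' ∈ P ∧ I g ∧ (Triangle.mk f g h ∈ distTriang C)

variable {C}

/-- The powers of the ideal `I`: `ipow n` consists of the `n`-fold composites of maps in `I`.
`ipow 0` consists of all maps. -/
def ProjClass.ipow (pc : ProjClass C) : ℕ → CategoryTheory.MorphismProperty C
  | 0 => fun _ _ _ => True
  | n + 1 => fun X Y g => ∃ (Z : C) (g₁ : X ⟶ Z) (g₂ : Z ⟶ Y),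
      pc.I g₁ ∧ pc.ipow n g₂ ∧ g₁ ≫ g₂ = g

/-- The derived classes `𝒫ₙ`: `pcl 0` consists of the zero objects, and `X ∈ pcl (n+1)` iff
`X` is a retract of an object `M` sitting in a distinguished triangle `P → M → Q → ΣP` with
`P ∈ 𝒫` and `Q ∈ pcl n`. -/
def ProjClass.pcl (pc : ProjClass C) : ℕ → Set C
  | 0 => {X | IsZero X}
  | n + 1 => {X | ∃ (M P Q : C) (r : X ⟶ M) (s : M ⟶ X) (f : P ⟶ M) (g : M ⟶ Q)
      (h : Q ⟶ P⟦(1 : ℤ)⟧), r ≫ s = 𝟙 X ∧ P ∈ pc.P ∧ Q ∈ pc.pcl n ∧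
      (Triangle.mk f g h ∈ distTriang C)}

/-- `X` has length `n` with respect to the projective class: `n` is the least natural
number with `X ∈ 𝒫ₙ`. -/
def ProjClass.Length (pc : ProjClass C) (X : C) (n : ℕ) : Prop :=
  X ∈ pc.pcl n ∧ ∀ m : ℕ, X ∈ pc.pcl m → n ≤ m

section ExactnessHelpers

open ZeroObject

variable {A B D W : C} {f : A ⟶ B} {g : B ⟶ D} {h : D ⟶ A⟦(1 : ℤ)⟧}

/-- Restatement of `Triangle.yoneda_exact₂` with unbundled triangles. -/
lemma tri_yoneda_exact₂ (hT : Triangle.mk f g h ∈ distTriang C) (φ : B ⟶ W)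
    (hφ : f ≫ φ = 0) : ∃ χ : D ⟶ W, φ = g ≫ χ :=
  Triangle.yoneda_exact₂ _ hT φ hφ

/-- Restatement of `Triangle.yoneda_exact₃` with unbundled triangles. -/
lemma tri_yoneda_exact₃ (hT : Triangle.mk f g h ∈ distTriang C) (φ : D ⟶ W)
    (hφ : g ≫ φ = 0) : ∃ χ : A⟦(1 : ℤ)⟧ ⟶ W, φ = h ≫ χ :=
  Triangle.yoneda_exact₃ _ hT φ hφ

/-- Restatement of `Triangle.coyoneda_exact₂` with unbundled triangles. -/
lemma tri_coyoneda_exact₂ (hT : Triangle.mk f g h ∈ distTriang C) (φ : W ⟶ B)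
    (hφ : φ ≫ g = 0) : ∃ χ : W ⟶ A, φ = χ ≫ f :=
  Triangle.coyoneda_exact₂ _ hT φ hφ

/-- Restatement of `Triangle.coyoneda_exact₃` with unbundled triangles. -/
lemma tri_coyoneda_exact₃ (hT : Triangle.mk f g h ∈ distTriang C) (φ : W ⟶ D)
    (hφ : φ ≫ h = 0) : ∃ χ : W ⟶ B, φ = χ ≫ g :=
  Triangle.coyoneda_exact₃ _ hT φ hφ

/-- Restatement of `complete_distinguished_triangle_morphism₂` with unbundled triangles. -/
lemma tri_complete₂ {A' B' D' : C} {f' : A' ⟶ B'} {g' : B' ⟶ D'} {h' : D' ⟶ A'⟦(1 : ℤ)⟧}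
    (hT : Triangle.mk f g h ∈ distTriang C) (hT' : Triangle.mk f' g' h' ∈ distTriang C)
    (a : A ⟶ A') (c : D ⟶ D') (comm : h ≫ a⟦(1 : ℤ)⟧' = c ≫ h') :
    ∃ b : B ⟶ B', f ≫ b = a ≫ f' ∧ g ≫ c = b ≫ g' :=
  complete_distinguished_triangle_morphism₂ _ _ hT hT' a c comm

/-- Restatement of `comp_distTriang_mor_zero₁₂` with unbundled triangles. -/
lemma tri_comp_zero₁₂ (hT : Triangle.mk f g h ∈ distTriang C) : f ≫ g = 0 :=
  comp_distTriang_mor_zero₁₂ _ hT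

/-- Restatement of `comp_distTriang_mor_zero₂₃` with unbundled triangles. -/
lemma tri_comp_zero₂₃ (hT : Triangle.mk f g h ∈ distTriang C) : g ≫ h = 0 :=
  comp_distTriang_mor_zero₂₃ _ hT

/-- Restatement of `distinguished_cocone_triangle` producing unbundled data. -/
lemma tri_cocone (ζ : A ⟶ B) : ∃ (W : C) (c : B ⟶ W) (d : W ⟶ A⟦(1 : ℤ)⟧),
    Triangle.mk ζ c d ∈ distTriang C :=
  distinguished_cocone_triangle ζ

/-- Restatement of `distinguished_cocone_triangle₂` producing unbundled data. -/
lemma tri_cocone₂ (q : D ⟶ A⟦(1 : ℤ)⟧) : ∃ (M : C) (f' : A ⟶ M) (g' : M ⟶ D),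
    Triangle.mk f' g' q ∈ distTriang C :=
  distinguished_cocone_triangle₂ q

/-- A triangle `0 → A → A → 0` is distinguished. -/
lemma tri_id_distinguished (A : C) :
    Triangle.mk (0 : (0 : C) ⟶ A) (𝟙 A) (0 : A ⟶ (0 : C)⟦(1 : ℤ)⟧) ∈ distTriang C :=
  contractible_distinguished₁ A

end ExactnessHelpers

namespace ProjClass

open ZeroObject

variable (pc : ProjClass C)

lemma I_precomp {A B D : C} (u : A ⟶ B) {g : B ⟶ D} (hg : pc.I g) : pc.I (u ≫ g) := by
  rw [pc.I_iff]
  intro P' hP' f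
  rw [← Category.assoc]
  exact (pc.I_iff g).mp hg P' hP' (f ≫ u)

lemma ipow_precomp (n : ℕ) : ∀ {A B D : C} (u : A ⟶ B) {g : B ⟶ D},
    pc.ipow n g → pc.ipow n (u ≫ g) := by
  induction n with
  | zero => intros; trivial
  | succ n _ =>
      intro A B D u g hg
      obtain ⟨Z, g₁, g₂, h₁, h₂, rfl⟩ := hg
      exact ⟨Z, u ≫ g₁, g₂, pc.I_precomp u h₁, h₂, by simp⟩

lemma ipow_postcomp (n : ℕ) : ∀ {A B D : C} {g : A ⟶ B}, pc.ipow n g → ∀ (v : B ⟶ D),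
    pc.ipow n (g ≫ v) := by
  induction n with
  | zero => intros; trivial
  | succ n ih =>
      intro A B D g hg v
      obtain ⟨Z, g₁, g₂, h₁, h₂, rfl⟩ := hg
      exact ⟨Z, g₁, g₂ ≫ v, h₁, ih h₂ v, by simp⟩

lemma ipow_comp (a : ℕ) : ∀ {b : ℕ} {A B D : C} {u : A ⟶ B} {v : B ⟶ D},
    pc.ipow a u → pc.ipow b v → pc.ipow (a + b) (u ≫ v) := by
  induction a with
  | zero =>
      intro b A B D u v _ hv
      simpa using pc.ipow_precomp b u hv
  | succ a ih =>
      intro b A B D u v hu hv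
      obtain ⟨Z, u₁, u₂, h₁, h₂, rfl⟩ := hu
      have harith : a + 1 + b = (a + b) + 1 := by omega
      rw [harith]
      exact ⟨Z, u₁, u₂ ≫ v, h₁, ih h₂ hv, by simp⟩

lemma ipow_split (a : ℕ) : ∀ {b : ℕ} {A B : C} {g : A ⟶ B}, pc.ipow (a + b) g →
    ∃ (Z : C) (u : A ⟶ Z) (v : Z ⟶ B), pc.ipow a u ∧ pc.ipow b v ∧ u ≫ v = g := by
  induction a with
  | zero =>
      intro b A B g hg
      exact ⟨A, 𝟙 A, g, trivial, by simpa using hg, by simp⟩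
  | succ a ih =>
      intro b A B g hg
      have harith : a + 1 + b = (a + b) + 1 := by omega
      rw [harith] at hg
      obtain ⟨Z, g₁, g₂, h₁, h₂, rfl⟩ := hg
      obtain ⟨Z', u, v, hu, hv, rfl⟩ := ih h₂
      exact ⟨Z', g₁ ≫ u, v, ⟨Z, g₁, u, h₁, hu, rfl⟩, hv, by simp⟩

lemma ipow_mono {a b : ℕ} (hab : a ≤ b) {A B : C} {g : A ⟶ B} (hg : pc.ipow b g) :
    pc.ipow a g := by
  have harith : b = a + (b - a) := by omega
  rw [harith] at hg
  obtain ⟨Z, u, v, hu, _, rfl⟩ := pc.ipow_split a hg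
  exact pc.ipow_postcomp a hu v

/-- Orthogonality: a map in `ℐⁿ` out of an object of `𝒫ₙ` is zero. -/
lemma pcl_orth (n : ℕ) : ∀ {X' W : C}, X' ∈ pc.pcl n → ∀ {φ : X' ⟶ W},
    pc.ipow n φ → φ = 0 := by
  induction n with
  | zero =>
      intro X' W hX' φ _
      exact (hX' : IsZero X').eq_of_src φ 0
  | succ n ih =>
      intro X' W hX' φ hφ
      obtain ⟨M, P, Q, r, s, fP, gM, h₀, hrs, hP, hQ, hdist⟩ := hX'
      obtain ⟨Z₀, ψ₁, ψ₂, hψ₁, hψ₂, rfl⟩ := hφ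
      have h1 : fP ≫ (s ≫ ψ₁) = 0 := by
        rw [← Category.assoc]
        exact (pc.P_iff P).mp hP ψ₁ hψ₁ (fP ≫ s)
      obtain ⟨χ, hχ⟩ := tri_yoneda_exact₂ hdist (s ≫ ψ₁) h1
      have hz : χ ≫ ψ₂ = 0 := ih hQ (pc.ipow_precomp n χ hψ₂)
      calc ψ₁ ≫ ψ₂ = (r ≫ s) ≫ ψ₁ ≫ ψ₂ := by rw [hrs, Category.id_comp]
        _ = r ≫ (s ≫ ψ₁) ≫ ψ₂ := by simp
        _ = r ≫ (gM ≫ χ) ≫ ψ₂ := by rw [hχ]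
        _ = r ≫ gM ≫ (χ ≫ ψ₂) := by simp
        _ = 0 := by rw [hz, comp_zero, comp_zero]

/-- The derived classes are closed under retracts. -/
lemma pcl_retract (n : ℕ) {Y N : C} (r : Y ⟶ N) (s : N ⟶ Y) (hrs : r ≫ s = 𝟙 Y)
    (hN : N ∈ pc.pcl n) : Y ∈ pc.pcl n := by
  cases n with
  | zero =>
      have hN' : IsZero N := hN
      show IsZero Y
      rw [IsZero.iff_id_eq_zero] at hN' ⊢
      calc 𝟙 Y = r ≫ s := hrs.symm
        _ = r ≫ 𝟙 N ≫ s := by simp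
        _ = 0 := by rw [hN', zero_comp, comp_zero]
  | succ n =>
      obtain ⟨M, P, Q, r', s', fP, gM, h₀, hrs', hP, hQ, hdist⟩ := hN
      exact ⟨M, P, Q, r ≫ r', s' ≫ s, fP, gM, h₀, by
        rw [Category.assoc, ← Category.assoc r', hrs', Category.id_comp, hrs],
        hP, hQ, hdist⟩

/-- The key resolution lemma: every object `A` sits in a distinguished triangle
`N → A → W → ΣN` with `N ∈ 𝒫ⱼ` and `A → W` in `ℐʲ`.  This is proved by induction,
entirely without the octahedral axiom. -/
lemma resolution (j : ℕ) : ∀ (A : C), ∃ (N W : C) (ζ : N ⟶ A) (c : A ⟶ W)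
    (d : W ⟶ N⟦(1 : ℤ)⟧), N ∈ pc.pcl j ∧ pc.ipow j c ∧
    (Triangle.mk ζ c d ∈ distTriang C) := by
  induction j with
  | zero =>
      intro A
      exact ⟨0, A, 0, 𝟙 A, 0, Limits.isZero_zero C, trivial, tri_id_distinguished A⟩
  | succ j ih =>
      intro A
      obtain ⟨P, A₁, fP, g₁, h₁, hP, hg₁, hTA⟩ := pc.exists_triangle A
      obtain ⟨N₁, W₁, ι₁, b₁, d₁, hN₁, hb₁, hT₁⟩ := ih A₁
      -- model of the fiber of the composite `A ⟶ A₁ ⟶ W₁`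
      obtain ⟨M', jm, pm, hTM⟩ := tri_cocone₂ (ι₁ ≫ h₁)
      have hM' : M' ∈ pc.pcl (j + 1) :=
        ⟨M', P, N₁, 𝟙 M', 𝟙 M', jm, pm, ι₁ ≫ h₁, by simp, hP, hN₁, hTM⟩
      -- the comparison map `ζ : M' ⟶ A`
      obtain ⟨ζ, hζ₁, hζ₂⟩ := tri_complete₂ hTM hTA (𝟙 P) ι₁ (by simp)
      rw [Category.id_comp] at hζ₁
      -- complete `ζ` to a distinguished triangle
      obtain ⟨W, c, d, hTW⟩ := tri_cocone ζ
      have hζc : ζ ≫ c = 0 := tri_comp_zero₁₂ hTW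
      -- `c` is in the ideal power `ℐ^(j+1)`
      have h1 : fP ≫ c = 0 := by rw [← hζ₁, Category.assoc, hζc, comp_zero]
      obtain ⟨c₁, hc₁⟩ := tri_yoneda_exact₂ hTA c h1
      have h2 : pm ≫ (ι₁ ≫ c₁) = 0 := by
        rw [← Category.assoc, hζ₂, Category.assoc, ← hc₁, hζc]
      obtain ⟨ψ, hψ⟩ := tri_yoneda_exact₃ hTM (ι₁ ≫ c₁) h2
      have hgh : g₁ ≫ h₁ = 0 := tri_comp_zero₂₃ hTA
      have hgc : g₁ ≫ (c₁ - h₁ ≫ ψ) = c := by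
        rw [Preadditive.comp_sub, ← hc₁, ← Category.assoc, hgh, zero_comp, sub_zero]
      have hιc : ι₁ ≫ (c₁ - h₁ ≫ ψ) = 0 := by
        rw [Preadditive.comp_sub, hψ, ← Category.assoc, sub_self]
      obtain ⟨e, he⟩ := tri_yoneda_exact₂ hT₁ (c₁ - h₁ ≫ ψ) hιc
      have hcpow : pc.ipow (j + 1) c :=
        ⟨A₁, g₁, c₁ - h₁ ≫ ψ, hg₁, by rw [he]; exact pc.ipow_postcomp j hb₁ e, hgc⟩
      exact ⟨M', W, ζ, c, d, hM', hcpow, hTW⟩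

end ProjClass

/-- If `X → Y → Z → ΣX` is distinguished, `X`, `Y`, `Z` have lengths `k`, `n`, `l`, and the
connecting map is in `ℐ^m` with `m ≤ l`, then `n ≤ max (k - m + l) l`. -/
theorem length_le_of_connecting_in_ipow (pc : ProjClass C) {X Y Z : C}
    (α : X ⟶ Y) (β : Y ⟶ Z) (γ : Z ⟶ X⟦(1 : ℤ)⟧)
    (hT : Triangle.mk α β γ ∈ distTriang C)
    {k n l m : ℕ} (hX : pc.Length X k) (hY : pc.Length Y n) (hZ : pc.Length Z l)
    (hγ : pc.ipow m γ) (hml : m ≤ l) :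
    n ≤ max (k - m + l) l := by
  -- resolution of `Y` at level `T := k - m + l`
  obtain ⟨N, W, ζ, c, d, hN, hc, hTW⟩ := pc.resolution (k - m + l) Y
  -- we show that `c = 0`
  have hc0 : c = 0 := by
    -- split `c` into pieces in `ℐ^(k-m)`, `ℐ^m`, `ℐ^(l-m)`
    obtain ⟨S₁, u, vw, hu, hvw, huvw⟩ := pc.ipow_split (k - m) hc
    have hl : l = m + (l - m) := by omega
    rw [hl] at hvw
    obtain ⟨S₂, v, w, hv, hw, hvw'⟩ := pc.ipow_split m hvw
    -- `α ≫ u ≫ v = 0` since it is in `ℐ^k` and `X` has length `k`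
    have huv : pc.ipow (k - m + m) ((α ≫ u) ≫ v) :=
      pc.ipow_comp (k - m) (pc.ipow_precomp (k - m) α hu) hv
    have hk : k ≤ k - m + m := by omega
    have hαuv : (α ≫ u) ≫ v = 0 := pc.pcl_orth k hX.1 (pc.ipow_mono hk huv)
    -- hence `u ≫ v` factors through `β`
    obtain ⟨ρ, hρ⟩ := tri_yoneda_exact₂ hT (u ≫ v)
      (by rw [← Category.assoc]; exact hαuv)
    -- every map from an object of `𝒫ₘ` into `Z` kills `ρ`
    have ρkill : ∀ {U : C}, U ∈ pc.pcl m → ∀ (x : U ⟶ Z), x ≫ ρ = 0 := by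
      intro U hU x
      have hxγ : x ≫ γ = 0 := pc.pcl_orth m hU (pc.ipow_precomp m x hγ)
      obtain ⟨y, hy⟩ := tri_coyoneda_exact₃ hT x hxγ
      have hstep : x ≫ ρ = (y ≫ u) ≫ v := by
        rw [hy, Category.assoc, ← hρ, ← Category.assoc, Category.assoc]
      rw [hstep]
      exact pc.pcl_orth m hU (pc.ipow_precomp m (y ≫ u) hv)
    -- resolution of `Z` at level `m`; `ρ` factors through its `ℐ^m`-part
    obtain ⟨Nm, Wm, ζm, cm, dm, hNm, hcm, hTm⟩ := pc.resolution m Z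
    obtain ⟨ρ', hρ'⟩ := tri_yoneda_exact₂ hTm ρ (ρkill hNm ζm)
    -- hence `ρ ≫ w` is in `ℐ^l` and must vanish since `Z` has length `l`
    have hρw : pc.ipow (m + (l - m)) (ρ ≫ w) := by
      rw [hρ', Category.assoc]
      exact pc.ipow_comp m hcm (pc.ipow_precomp (l - m) ρ' hw)
    rw [← hl] at hρw
    have hρw0 : ρ ≫ w = 0 := pc.pcl_orth l hZ.1 hρw
    -- conclude `c = 0`
    calc c = u ≫ vw := huvw.symm
      _ = (u ≫ v) ≫ w := by rw [← hvw']; simp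
      _ = (β ≫ ρ) ≫ w := by rw [hρ]
      _ = β ≫ (ρ ≫ w) := by simp
      _ = 0 := by rw [hρw0, comp_zero]
  -- since `c = 0`, the identity of `Y` factors through `ζ`, so `Y` is a retract of `N`
  obtain ⟨κ, hκ⟩ := tri_coyoneda_exact₂ hTW (𝟙 Y) (by rw [hc0, comp_zero])
  have hYT : Y ∈ pc.pcl (k - m + l) := pc.pcl_retract (k - m + l) κ ζ hκ.symm hN
  exact le_trans (hY.2 (k - m + l) hYT) (le_max_left _ _)
end

section
/- Let 𝕋 be a triangulated category with a projective class (𝒫, ℐ), and let X → Y →^β Z →^γ ΣX be a distinguished triangle with β right almost split (i.e., β is not split epic and every map Y′ → Z that is not split epic factors through β). If Z has finite length l with respect to (𝒫, ℐ), then γ ∈ ℐ^{l−1}. -/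
open CategoryTheory Limits Pretriangulated

universe v u

variable (C : Type u) [Category.{v} C] [Preadditive C] [HasZeroObject C] [HasShift C ℤ]
  [∀ n : ℤ, (CategoryTheory.shiftFunctor C n).Additive] [Pretriangulated C]

variable {C}

/-!
Choose a triangle `V → Z →d W → ΣV` with `V ∈ 𝒫_{l-1}` and `d ∈ ℐ^{l-1}`; it is built by induction,
splicing the triangles `P → Z → Z₁` with `P ∈ 𝒫`, `Z → Z₁ ∈ ℐ` onto each other. Since `Z` has
length `l`, the map `V → Z` cannot be split epic, so it factors through `β` and is therefore
killed by `γ`. Hence `γ` factors through `d`, and ideals are closed under composition.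
-/

/-- With the octahedral axiom, `k` would be a fibre of `g ≫ c`; `Pretriangulated` does not provide
it, but this weaker factorization suffices. -/
lemma exists_comp_comp_eq_of_comp_eq_zero {P Z Z₁ V W G D : C}
    {f : P ⟶ Z} {g : Z ⟶ Z₁} {h : Z₁ ⟶ P⟦(1 : ℤ)⟧} (hT₁ : Triangle.mk f g h ∈ distTriang C)
    {v : V ⟶ Z₁} {c : Z₁ ⟶ W} {w : W ⟶ V⟦(1 : ℤ)⟧} (hT₂ : Triangle.mk v c w ∈ distTriang C)
    {i : P ⟶ G} {p : G ⟶ V} (hTG : Triangle.mk i p (v ≫ h) ∈ distTriang C)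
    {k : G ⟶ Z} (hik : i ≫ k = f) (hpk : p ≫ v = k ≫ g) (d : Z ⟶ D) (hkd : k ≫ d = 0) :
    ∃ ε : W ⟶ D, d = g ≫ c ≫ ε := by
  obtain ⟨d₁, rfl⟩ : ∃ d₁ : Z₁ ⟶ D, d = g ≫ d₁ := Triangle.yoneda_exact₂ _ hT₁ d (by
    change f ≫ d = 0
    rw [← hik, Category.assoc, hkd, comp_zero])
  obtain ⟨ψ, hψ⟩ : ∃ ψ : P⟦(1 : ℤ)⟧ ⟶ D, v ≫ d₁ = (v ≫ h) ≫ ψ :=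
    Triangle.yoneda_exact₃ _ hTG (v ≫ d₁) (by
      change p ≫ v ≫ d₁ = 0
      rw [reassoc_of% hpk, hkd])
  -- correcting `d₁` by `h ≫ ψ` does not change `g ≫ d₁`, but makes it vanish on `v`
  obtain ⟨ε, hε⟩ : ∃ ε : W ⟶ D, d₁ - h ≫ ψ = c ≫ ε := Triangle.yoneda_exact₂ _ hT₂ _ (by
    change v ≫ (d₁ - h ≫ ψ) = 0
    rw [Preadditive.comp_sub, hψ, Category.assoc, sub_self])
  have hgh : g ≫ h = 0 := comp_distTriang_mor_zero₂₃ _ hT₁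
  refine ⟨ε, ?_⟩
  rw [← hε, Preadditive.comp_sub, reassoc_of% hgh, zero_comp, sub_zero]

namespace ProjClass

variable (pc : ProjClass C)

lemma ipow_comp_right (n : ℕ) :
    ∀ {X Y W : C} (u : X ⟶ Y), pc.ipow n u → ∀ (e : Y ⟶ W), pc.ipow n (u ≫ e) := by
  induction n with
  | zero => intros; trivial
  | succ n ih =>
    rintro X Y W u ⟨Z, g₁, g₂, hg₁, hg₂, rfl⟩ e
    exact ⟨Z, g₁, g₂ ≫ e, hg₁, ih _ hg₂ e, by simp⟩

lemma mem_pcl_of_retract {n : ℕ} {Z V : C} (σ : Z ⟶ V) (m : V ⟶ Z) (hσ : σ ≫ m = 𝟙 Z)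
    (hV : V ∈ pc.pcl n) : Z ∈ pc.pcl n := by
  cases n with
  | zero => exact (IsZero.iff_id_eq_zero Z).2 (by rw [← hσ, hV.eq_of_src m 0, comp_zero])
  | succ n =>
    obtain ⟨M, P, Q, r, s, f, g, h, hrs, hP, hQ, hT⟩ := hV
    refine ⟨M, P, Q, σ ≫ r, s ≫ m, f, g, h, ?_, hP, hQ, hT⟩
    rw [Category.assoc, reassoc_of% hrs, hσ]

lemma not_exists_section_of_length {l n : ℕ} (hnl : n < l) {Z V : C} (hZ : pc.Length Z l)
    (hV : V ∈ pc.pcl n) (m : V ⟶ Z) : ¬ ∃ σ : Z ⟶ V, σ ≫ m = 𝟙 Z := by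
  rintro ⟨σ, hσ⟩
  exact Nat.not_le.2 hnl (hZ.2 n (pc.mem_pcl_of_retract σ m hσ hV))

open ZeroObject in
lemma exists_distTriang_pcl_ipow (n : ℕ) (Z : C) :
    ∃ (V W : C) (m : V ⟶ Z) (d : Z ⟶ W) (ι : W ⟶ V⟦(1 : ℤ)⟧),
      V ∈ pc.pcl n ∧ pc.ipow n d ∧ Triangle.mk m d ι ∈ distTriang C := by
  induction n generalizing Z with
  | zero => exact ⟨0, Z, 0, 𝟙 Z, 0, isZero_zero C, trivial, contractible_distinguished₁ Z⟩
  | succ n ih =>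
    obtain ⟨P, Z₁, f, g, h, hP, hg, hT₁⟩ := pc.exists_triangle Z
    obtain ⟨V, W, v, c, w, hV, hc, hT₂⟩ := ih Z₁
    obtain ⟨G, i, p, hTG⟩ := distinguished_cocone_triangle₂ (v ≫ h)
    obtain ⟨k, hik, hpk⟩ : ∃ k : G ⟶ Z, i ≫ k = 𝟙 P ≫ f ∧ p ≫ v = k ≫ g :=
      complete_distinguished_triangle_morphism₂ _ _ hTG hT₁ (𝟙 P) v (by
        change (v ≫ h) ≫ (shiftFunctor C (1 : ℤ)).map (𝟙 P) = v ≫ h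
        rw [CategoryTheory.Functor.map_id, Category.comp_id])
    obtain ⟨D, d, e, hT₃⟩ := distinguished_cocone_triangle k
    obtain ⟨ε, hε⟩ := exists_comp_comp_eq_of_comp_eq_zero hT₁ hT₂ hTG
      (by rw [hik, Category.id_comp]) hpk d (comp_distTriang_mor_zero₁₂ _ hT₃)
    refine ⟨G, D, k, d, e, ⟨G, P, V, 𝟙 G, 𝟙 G, i, p, v ≫ h, by simp, hP, hV, hTG⟩, ?_, hT₃⟩
    exact ⟨Z₁, g, c ≫ ε, hg, pc.ipow_comp_right n c hc ε, hε.symm⟩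

end ProjClass

theorem connecting_in_ipow_of_rightAlmostSplit_general (pc : ProjClass C) {X Y Z : C}
    (α : X ⟶ Y) (β : Y ⟶ Z) (γ : Z ⟶ X⟦(1 : ℤ)⟧)
    (hT : Triangle.mk α β γ ∈ distTriang C)
    (hβ₂ : ∀ (Y' : C) (f : Y' ⟶ Z), (¬ ∃ s : Z ⟶ Y', s ≫ f = 𝟙 Z) → ∃ t : Y' ⟶ Y, t ≫ β = f)
    {l : ℕ} (hZ : pc.Length Z l) :
    pc.ipow (l - 1) γ := by
  cases l with
  | zero => trivial
  | succ n =>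
    obtain ⟨V, W, m, d, ι, hV, hd, hT'⟩ := pc.exists_distTriang_pcl_ipow n Z
    obtain ⟨t, rfl⟩ := hβ₂ V m (pc.not_exists_section_of_length n.lt_succ_self hZ hV m)
    obtain ⟨ε, rfl⟩ : ∃ ε : W ⟶ X⟦(1 : ℤ)⟧, γ = d ≫ ε := Triangle.yoneda_exact₂ _ hT' γ (by
      have hβγ : β ≫ γ = 0 := comp_distTriang_mor_zero₂₃ _ hT
      change (t ≫ β) ≫ γ = 0
      rw [Category.assoc, hβγ, comp_zero])
    exact pc.ipow_comp_right n d hd ε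

/-- If `X → Y →β Z →γ ΣX` is distinguished with `β` right almost split (not split epic,
and every non-split-epic map into `Z` factors through `β`), and `Z` has finite length `l`,
then `γ ∈ ℐ^(l-1)`. -/
theorem connecting_in_ipow_of_rightAlmostSplit (pc : ProjClass C) {X Y Z : C}
    (α : X ⟶ Y) (β : Y ⟶ Z) (γ : Z ⟶ X⟦(1 : ℤ)⟧)
    (hT : Triangle.mk α β γ ∈ distTriang C)
    (hβ₁ : ¬ ∃ s : Z ⟶ Y, s ≫ β = 𝟙 Z)
    (hβ₂ : ∀ (Y' : C) (f : Y' ⟶ Z), (¬ ∃ s : Z ⟶ Y', s ≫ f = 𝟙 Z) → ∃ t : Y' ⟶ Y, t ≫ β = f)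
    {l : ℕ} (hZ : pc.Length Z l) :
    pc.ipow (l - 1) γ :=
  connecting_in_ipow_of_rightAlmostSplit_general pc α β γ hT hβ₂ hZ
end

section
/- Let 𝕋 be a triangulated category, (𝒫, ℐ) and (𝒫′, ℐ′) projective classes on 𝕋 with 𝒫′ ⊆ 𝒫. Suppose M ∈ 𝕋 satisfies len_{𝒫′}(M) = len_{𝒫}(M) = m, and there is a distinguished triangle L → M → N with L ∈ 𝒫′_{m−n} and N ∈ 𝒫′ₙ. Then len_{𝒫′}(L) = len_{𝒫}(L) = m − n and len_{𝒫′}(N) = len_{𝒫}(N) = n. -/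
open CategoryTheory Limits Pretriangulated

universe v u

variable (C : Type u) [Category.{v} C] [Preadditive C] [HasZeroObject C] [HasShift C ℤ]
  [∀ n : ℤ, (CategoryTheory.shiftFunctor C n).Additive] [Pretriangulated C]

variable {C}

/-!
Maps out of an object of `𝒫ₙ` are killed by every composite of `n` maps of `ℐ`. Conversely,
splicing the triangles `P → X → Y` with `P ∈ 𝒫`, `X → Y ∈ ℐ` gives, by induction, `V ∈ 𝒫ₙ`
and `ρ : V → X` through which every map killed by a fixed `ℐⁿ`-map `X → T` lifts; if all
`ℐⁿ`-maps out of `X` vanish, the identity of `X` lifts and `X` is a retract of `V`. Splitting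
an `ℐ^(a+b)`-map out of the middle term of a triangle `L → M → N` then gives
`len M ≤ len L + len N`. As `𝒫′ₖ ⊆ 𝒫ₖ`, `L ∈ 𝒫_{m-n}` and `N ∈ 𝒫ₙ`, and subadditivity with
`len_𝒫 M = m` rules out smaller lengths, first for `𝒫` and hence for `𝒫′`.
-/

namespace ProjClass

open ZeroObject

section

variable {pc pc' : ProjClass C}

lemma pcl_mono (hsub : pc'.P ⊆ pc.P) : ∀ (n : ℕ) {X : C}, X ∈ pc'.pcl n → X ∈ pc.pcl n
  | 0, _, hX => hX
  | n + 1, _, ⟨M, P, Q, r, s, f, g, h, hrs, hP, hQ, hT⟩ =>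
    ⟨M, P, Q, r, s, f, g, h, hrs, hsub hP, pcl_mono hsub n hQ, hT⟩

lemma mem_pcl_of_retract_s4 (n : ℕ) {X M : C} (r : X ⟶ M) (s : M ⟶ X) (hrs : r ≫ s = 𝟙 X)
    (hM : M ∈ pc.pcl n) : X ∈ pc.pcl n := by
  cases n with
  | zero =>
    change IsZero X
    rw [IsZero.iff_id_eq_zero, ← hrs, (show IsZero M from hM).eq_of_tgt r 0, zero_comp]
  | succ n =>
    obtain ⟨M₁, P, Q, r₁, s₁, f, g, h, hrs₁, hP, hQ, hT⟩ := hM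
    refine ⟨M₁, P, Q, r ≫ r₁, s₁ ≫ s, f, g, h, ?_, hP, hQ, hT⟩
    rw [Category.assoc, reassoc_of% hrs₁, hrs]

lemma comp_eq_zero_of_mem_pcl : ∀ (n : ℕ) {X : C}, X ∈ pc.pcl n →
    ∀ {S S' : C} (u : S ⟶ S'), pc.ipow n u → ∀ f : X ⟶ S, f ≫ u = 0
  | 0, _, hX, _, _, u, _, f => (show IsZero _ from hX).eq_of_src (f ≫ u) 0
  | n + 1, _, ⟨M, P, Q, r, s, f₀, g₀, h₀, hrs, hP, hQ, hT⟩, _, _, u,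
      ⟨Z, u₁, u₂, hu₁, hu₂, hu⟩, f => by
    have hP_u₁ : f₀ ≫ (s ≫ f ≫ u₁) = 0 := by
      simpa only [Category.assoc] using (pc.P_iff P).mp hP u₁ hu₁ (f₀ ≫ s ≫ f)
    obtain ⟨w : Q ⟶ Z, hw : s ≫ f ≫ u₁ = g₀ ≫ w⟩ := Triangle.yoneda_exact₂ _ hT _ hP_u₁
    calc f ≫ u = r ≫ (s ≫ f ≫ u₁) ≫ u₂ := by
          rw [← hu]; simp only [Category.assoc, reassoc_of% hrs]
      _ = 0 := by
          rw [hw, Category.assoc, comp_eq_zero_of_mem_pcl n hQ u₂ hu₂ w, comp_zero, comp_zero]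

lemma exists_ipow_comp_ipow_of_ipow_add : ∀ (a b : ℕ) {S S' : C} (u : S ⟶ S'),
    pc.ipow (a + b) u →
      ∃ (Z : C) (u₁ : S ⟶ Z) (u₂ : Z ⟶ S'), pc.ipow a u₁ ∧ pc.ipow b u₂ ∧ u₁ ≫ u₂ = u
  | 0, b, S, _, u, hu => ⟨S, 𝟙 S, u, trivial, by rwa [zero_add] at hu, Category.id_comp u⟩
  | a + 1, b, _, _, _, hu => by
    obtain ⟨Z, g₁, g₂, hg₁, hg₂, rfl⟩ : pc.ipow ((a + b) + 1) _ := by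
      rwa [Nat.add_right_comm] at hu
    obtain ⟨Z', v₁, v₂, hv₁, hv₂, rfl⟩ := exists_ipow_comp_ipow_of_ipow_add a b g₂ hg₂
    exact ⟨Z', g₁ ≫ v₁, v₂, ⟨Z, g₁, v₁, hg₁, hv₁, rfl⟩, hv₂, Category.assoc _ _ _⟩

end

def LiftsMapsKilledBy {V X T : C} (ρ : V ⟶ X) (c : X ⟶ T) : Prop :=
  ∀ ⦃S : C⦄ (ξ : S ⟶ X), ξ ≫ c = 0 → ∃ ξ' : S ⟶ V, ξ' ≫ ρ = ξ

/-- A map `ξ` killed by `q₀ ≫ c'` lifts in three moves: `ξ ≫ q₀` lifts to `V'`; this lift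
continues to `V` because its composite with `ρ' ≫ α₀` is `ξ ≫ q₀ ≫ α₀ = 0`; and the
remaining error is killed by `q₀`, so it comes from `P₀`, which maps to `V` through `i`. -/
lemma liftsMapsKilledBy_comp {P₀ X X₁ V V' T : C} {u₀ : P₀ ⟶ X} {q₀ : X ⟶ X₁}
    {α₀ : X₁ ⟶ P₀⟦(1 : ℤ)⟧} {ρ' : V' ⟶ X₁} {c' : X₁ ⟶ T} {i : P₀ ⟶ V} {p : V ⟶ V'}
    {ρ : V ⟶ X} (hT₀ : Triangle.mk u₀ q₀ α₀ ∈ distTriang C)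
    (hT : Triangle.mk i p (ρ' ≫ α₀) ∈ distTriang C) (hi : i ≫ ρ = u₀)
    (hp : p ≫ ρ' = ρ ≫ q₀) (hρ' : LiftsMapsKilledBy ρ' c') :
    LiftsMapsKilledBy ρ (q₀ ≫ c') := by
  intro S ξ hξ
  obtain ⟨ξ₁, hξ₁⟩ := hρ' (ξ ≫ q₀) (by rwa [Category.assoc])
  have hqα : q₀ ≫ α₀ = 0 := comp_distTriang_mor_zero₂₃ _ hT₀
  have hξ₁α : ξ₁ ≫ ρ' ≫ α₀ = 0 := by rw [reassoc_of% hξ₁, hqα, comp_zero]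
  obtain ⟨ξ₂ : S ⟶ V, hξ₂ : ξ₁ = ξ₂ ≫ p⟩ := Triangle.coyoneda_exact₃ _ hT ξ₁ hξ₁α
  have herr : (ξ - ξ₂ ≫ ρ) ≫ q₀ = 0 := by
    rw [Preadditive.sub_comp, Category.assoc, ← hp, ← Category.assoc, ← hξ₂, hξ₁, sub_self]
  obtain ⟨ξ₃ : S ⟶ P₀, hξ₃ : ξ - ξ₂ ≫ ρ = ξ₃ ≫ u₀⟩ :=
    Triangle.coyoneda_exact₂ _ hT₀ (ξ - ξ₂ ≫ ρ) herr
  refine ⟨ξ₂ + ξ₃ ≫ i, ?_⟩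
  rw [Preadditive.add_comp, Category.assoc, hi, ← hξ₃, add_sub_cancel]

lemma exists_liftsMapsKilledBy_ipow (pc : ProjClass C) (n : ℕ) (X : C) :
    ∃ (V T : C) (ρ : V ⟶ X) (c : X ⟶ T),
      V ∈ pc.pcl n ∧ pc.ipow n c ∧ LiftsMapsKilledBy ρ c := by
  induction n generalizing X with
  | zero =>
    refine ⟨0, X, 0, 𝟙 X, isZero_zero C, trivial, fun S ξ hξ => ⟨0, ?_⟩⟩
    rw [zero_comp, ← hξ, Category.comp_id]
  | succ n ih =>
    obtain ⟨P₀, X₁, u₀, q₀, α₀, hP₀, hq₀, hT₀⟩ := pc.exists_triangle X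
    obtain ⟨V', T, ρ', c', hV', hc', hρ'⟩ := ih X₁
    obtain ⟨V, i, p, hT⟩ := distinguished_cocone_triangle₂ (ρ' ≫ α₀)
    obtain ⟨ρ, hi : i ≫ ρ = 𝟙 P₀ ≫ u₀, hp : p ≫ ρ' = ρ ≫ q₀⟩ :=
      complete_distinguished_triangle_morphism₂ (Triangle.mk i p (ρ' ≫ α₀))
        (Triangle.mk u₀ q₀ α₀) hT hT₀ (𝟙 P₀) ρ'
        (by erw [CategoryTheory.Functor.map_id, Category.comp_id]; rfl)
    rw [Category.id_comp] at hi
    refine ⟨V, T, ρ, q₀ ≫ c', ⟨V, P₀, V', 𝟙 V, 𝟙 V, i, p, ρ' ≫ α₀, Category.id_comp _, hP₀,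
      hV', hT⟩, ⟨X₁, q₀, c', hq₀, hc', rfl⟩, liftsMapsKilledBy_comp hT₀ hT hi hp hρ'⟩

lemma mem_pcl_of_ipow_eq_zero (pc : ProjClass C) (n : ℕ) (X : C)
    (hX : ∀ ⦃T : C⦄ (c : X ⟶ T), pc.ipow n c → c = 0) : X ∈ pc.pcl n := by
  obtain ⟨V, T, ρ, c, hV, hc, hρ⟩ := pc.exists_liftsMapsKilledBy_ipow n X
  obtain ⟨r, hr⟩ := hρ (𝟙 X) (by rw [Category.id_comp, hX c hc])
  exact mem_pcl_of_retract_s4 n r ρ hr hV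

lemma mem_pcl_add_of_distTriang (pc : ProjClass C) {L M N : C}
    {f : L ⟶ M} {g : M ⟶ N} {h : N ⟶ L⟦(1 : ℤ)⟧} (hT : Triangle.mk f g h ∈ distTriang C)
    {a b : ℕ} (hL : L ∈ pc.pcl a) (hN : N ∈ pc.pcl b) : M ∈ pc.pcl (a + b) := by
  refine pc.mem_pcl_of_ipow_eq_zero _ M fun T c hc => ?_
  obtain ⟨Z, u₁, u₂, hu₁, hu₂, rfl⟩ := exists_ipow_comp_ipow_of_ipow_add a b c hc
  obtain ⟨w : N ⟶ Z, hw : u₁ = g ≫ w⟩ :=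
    Triangle.yoneda_exact₂ _ hT u₁ (comp_eq_zero_of_mem_pcl a hL u₁ hu₁ f)
  rw [hw, Category.assoc, comp_eq_zero_of_mem_pcl b hN u₂ hu₂ w, comp_zero]

lemma Length.le_add_of_distTriang {pc : ProjClass C} {L M N : C} {m : ℕ}
    (hM : pc.Length M m) {f : L ⟶ M} {g : M ⟶ N} {h : N ⟶ L⟦(1 : ℤ)⟧}
    (hT : Triangle.mk f g h ∈ distTriang C) {a b : ℕ} (hL : L ∈ pc.pcl a)
    (hN : N ∈ pc.pcl b) : m ≤ a + b :=
  hM.2 _ (pc.mem_pcl_add_of_distTriang hT hL hN)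

lemma Length.of_subset {pc pc' : ProjClass C} (hsub : pc'.P ⊆ pc.P) {X : C} {k : ℕ}
    (hX : pc.Length X k) (hX' : X ∈ pc'.pcl k) : pc'.Length X k :=
  ⟨hX', fun j hj => hX.2 j (pcl_mono hsub j hj)⟩

end ProjClass

theorem lengths_of_nested_projective_classes_general (pc pc' : ProjClass C)
    (hsub : pc'.P ⊆ pc.P) {L M N : C}
    (f : L ⟶ M) (g : M ⟶ N) (h : N ⟶ L⟦(1 : ℤ)⟧)
    (hT : Triangle.mk f g h ∈ distTriang C)
    {m n : ℕ} (hnm : n ≤ m)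
    (hM : pc.Length M m)
    (hL : L ∈ pc'.pcl (m - n)) (hN : N ∈ pc'.pcl n) :
    pc'.Length L (m - n) ∧ pc.Length L (m - n) ∧ pc'.Length N n ∧ pc.Length N n := by
  have hLP : L ∈ pc.pcl (m - n) := ProjClass.pcl_mono hsub _ hL
  have hNP : N ∈ pc.pcl n := ProjClass.pcl_mono hsub _ hN
  have hLlen : pc.Length L (m - n) :=
    ⟨hLP, fun k hk => by have := hM.le_add_of_distTriang hT hk hNP; omega⟩
  have hNlen : pc.Length N n :=
    ⟨hNP, fun k hk => by have := hM.le_add_of_distTriang hT hLP hk; omega⟩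
  exact ⟨hLlen.of_subset hsub hL, hLlen, hNlen.of_subset hsub hN, hNlen⟩

/-- For nested projective classes `𝒫' ⊆ 𝒫`: if `M` has the same length `m` for both,
and `L → M → N → ΣL` is distinguished with `L ∈ 𝒫'_{m-n}` and `N ∈ 𝒫'ₙ`, then
`L` has length `m - n` and `N` has length `n` with respect to both classes. -/
theorem lengths_of_nested_projective_classes (pc pc' : ProjClass C)
    (hsub : pc'.P ⊆ pc.P) {L M N : C}
    (f : L ⟶ M) (g : M ⟶ N) (h : N ⟶ L⟦(1 : ℤ)⟧)
    (hT : Triangle.mk f g h ∈ distTriang C)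
    {m n : ℕ} (hnm : n ≤ m)
    (hM' : pc'.Length M m) (hM : pc.Length M m)
    (hL : L ∈ pc'.pcl (m - n)) (hN : N ∈ pc'.pcl n) :
    pc'.Length L (m - n) ∧ pc.Length L (m - n) ∧ pc'.Length N n ∧ pc.Length N n :=
  lengths_of_nested_projective_classes_general pc pc' hsub f g h hT hnm hM hL hN
end

section
/- Let k be a field of characteristic p, let A = C_{p^{r₁}} × ⋯ × C_{p^{r_l}} be an abelian p-group with gᵢ a generator of the i-th cyclic factor, and let Mᵢ = kC_{p^{rᵢ}}/(gᵢ − 1)^{nᵢ} be an indecomposable kC_{p^{rᵢ}}-module of dimension nᵢ (1 ≤ nᵢ ≤ p^{rᵢ}). Then the kA-module M = M₁ ⊗_k ⋯ ⊗_k M_l (with componentwise action) has radical length exactly 1 + (n₁ − 1) + ⋯ + (n_l − 1). -/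
open MonoidAlgebra Finset

/-!
Write `xᵢ = gᵢ - 1`. In characteristic `p` each `xᵢ` is nilpotent, and the `xᵢ` generate the
augmentation ideal, which is maximal; so the Jacobson radical `J` is the ideal `(x₁, …, x_l)` and
the radical length of `M = kA / (x₁^{n₁}, …, x_l^{n_l})` is the least `N` with
`J^N ⊆ (x₁^{n₁}, …, x_l^{n_l})`. A product of `∑ (nᵢ - 1) + 1` of the `xᵢ` contains some `xᵢ` at
least `nᵢ` times, so `N ≤ ∑ (nᵢ - 1) + 1`. Conversely `∏ xᵢ^{nᵢ-1}` is not in the ideal: multiplying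
by `∏ xᵢ^{qᵢ-nᵢ}` (with `qᵢ = p^{rᵢ}`) kills the ideal, since `xᵢ^{qᵢ} = 0`, but turns
`∏ xᵢ^{nᵢ-1}` into `∏ xᵢ^{qᵢ-1}`. In characteristic `p`, `(g - 1)^{q-1} = 1 + g + ⋯ + g^{q-1}`,
so this is the sum of all elements of `A`, which is nonzero.
-/

namespace Ideal

section CommSemiring

variable {R : Type*} [CommSemiring R]

theorem sup_pow_add_add_one_le (I J : Ideal R) (a b : ℕ) :
    (I ⊔ J) ^ (a + b + 1) ≤ I ^ (a + 1) ⊔ J ^ (b + 1) := by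
  rw [← add_eq_sup, ← add_eq_sup, add_pow, sum_eq_sup]
  refine Finset.sup_le fun i hi => ?_
  by_cases h : a + 1 ≤ i
  · exact mul_le_left.trans (mul_le_left.trans ((pow_le_pow_right h).trans le_sup_left))
  · refine mul_le_left.trans (mul_le_right.trans ((pow_le_pow_right ?_).trans le_sup_right))
    have := Finset.mem_range.1 hi
    omega

theorem span_image_pow_sum_add_one_le {ι : Type*} (s : Finset ι) (x : ι → R) (n : ι → ℕ) :
    span (x '' s) ^ (∑ i ∈ s, n i + 1) ≤ span ((fun i => x i ^ (n i + 1)) '' s) := by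
  classical
  induction s using Finset.induction_on with
  | empty => simp
  | insert a s ha ih =>
    rw [coe_insert, Set.image_insert_eq, Set.image_insert_eq, span_insert, span_insert,
      sum_insert ha]
    calc _ ≤ span {x a} ^ (n a + 1) ⊔ span (x '' s) ^ (∑ i ∈ s, n i + 1) :=
          sup_pow_add_add_one_le ..
      _ ≤ _ := by
          rw [span_singleton_pow]
          exact sup_le_sup_left ih _

theorem span_range_pow_sum_add_one_le {ι : Type*} [Fintype ι] (x : ι → R) (n : ι → ℕ) :
    span (Set.range x) ^ (∑ i, n i + 1) ≤ span (Set.range fun i => x i ^ (n i + 1)) := by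
  simpa only [coe_univ, Set.image_univ] using span_image_pow_sum_add_one_le univ x n

theorem prod_pow_mem_span_range_pow_sum {ι : Type*} [Fintype ι] (x : ι → R) (n : ι → ℕ) :
    ∏ i, x i ^ n i ∈ span (Set.range x) ^ ∑ i, n i := by
  rw [← prod_pow_eq_pow_sum]
  exact prod_mem_prod fun i _ => pow_mem_pow (subset_span (Set.mem_range_self i)) _

theorem prod_pow_notMem_span_range_pow_succ {ι : Type*} [Fintype ι] (x : ι → R)
    {n q : ι → ℕ} (hx : ∀ i, x i ^ (q i + 1) = 0) (hq : ∏ i, x i ^ q i ≠ 0)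
    (hn : ∀ i, n i ≤ q i) :
    ∏ i, x i ^ n i ∉ span (Set.range fun i => x i ^ (n i + 1)) := by
  classical
  have hann : span (Set.range fun i => x i ^ (n i + 1)) ≤
      (Submodule.span R {∏ i, x i ^ (q i - n i)}).annihilator := by
    refine span_le.2 (Set.range_subset_iff.2 fun i => ?_)
    rw [SetLike.mem_coe, Submodule.mem_annihilator_span_singleton, smul_eq_mul,
      ← mul_prod_erase univ _ (mem_univ i), ← mul_assoc, ← pow_add,
      show n i + 1 + (q i - n i) = q i + 1 by have := hn i; omega, hx, zero_mul]
  intro h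
  have := hann h
  rw [Submodule.mem_annihilator_span_singleton, smul_eq_mul, ← prod_mul_distrib] at this
  refine hq (Eq.trans (prod_congr rfl fun i _ => ?_) this)
  rw [← pow_add, Nat.add_sub_cancel' (hn i)]

end CommSemiring

variable {R : Type*} [CommRing R]

theorem jacobson_bot_eq_of_le_nilradical {I : Ideal R} [I.IsMaximal] (h : I ≤ nilradical R) :
    jacobson (⊥ : Ideal R) = I :=
  le_antisymm (sInf_le ⟨bot_le, ‹_›⟩) (h.trans radical_le_jacobson)

theorem smul_top_quotient_eq_bot_iff (I J : Ideal R) :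
    J • (⊤ : Submodule R (R ⧸ I)) = ⊥ ↔ J ≤ I := by
  rw [← Submodule.le_annihilator_iff, Submodule.annihilator_top, annihilator_quotient]

end Ideal

theorem sub_one_pow_prime_pow_sub_one {R : Type*} [CommRing R] (p : ℕ) [Fact p.Prime]
    [CharP R p] (x : R) (r : ℕ) : (x - 1) ^ (p ^ r - 1) = ∑ j ∈ range (p ^ r), x ^ j := by
  open Polynomial in
  have key : ((X - 1) ^ (p ^ r - 1) : (ZMod p)[X]) = ∑ j ∈ range (p ^ r), X ^ j := by
    refine mul_right_cancel₀ (X_sub_C_ne_zero (1 : ZMod p)) ?_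
    rw [C_1, ← pow_succ, Nat.sub_add_cancel (Nat.one_le_pow _ _ (Nat.Prime.pos Fact.out)),
      sub_pow_char_pow, one_pow, geom_sum_mul]
  simpa only [map_pow, map_sub, map_one, map_sum, Polynomial.coe_eval₂RingHom,
    Polynomial.eval₂_X] using congrArg (Polynomial.eval₂RingHom (ZMod.castHom dvd_rfl R) x) key

abbrev PiZMod {ι : Type*} (q : ι → ℕ) := Multiplicative (∀ i, ZMod (q i))

namespace PiZMod

variable {ι : Type*} [DecidableEq ι] (q : ι → ℕ)

def gen (i : ι) : PiZMod q := Multiplicative.ofAdd (Pi.single i 1)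

theorem prod_gen_pow [Fintype ι] (e : ι → ℕ) :
    ∏ i, gen q i ^ e i = Multiplicative.ofAdd fun i => (e i : ZMod (q i)) := by
  apply Multiplicative.toAdd.injective
  simp [gen, toAdd_prod, ← Pi.single_smul, Finset.univ_sum_single]

theorem gen_pow_self (i : ι) : gen q i ^ q i = 1 := by
  apply Multiplicative.toAdd.injective
  simp [gen, ← Pi.single_smul]

theorem prod_gen_pow_val [Fintype ι] [∀ i, NeZero (q i)] (a : PiZMod q) :
    ∏ i, gen q i ^ (Multiplicative.toAdd a i).val = a := by
  simp [prod_gen_pow]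

end PiZMod

namespace MonoidAlgebra

instance charP (p : ℕ) (k G : Type*) [CommSemiring k] [CharP k p] [Monoid G] :
    CharP (MonoidAlgebra k G) p :=
  charP_of_injective_algebraMap single_right_injective p

theorem sum_single_one_ne_zero {k G : Type*} [Semiring k] [Nontrivial k] [Monoid G]
    [Fintype G] : ∑ a : G, single a (1 : k) ≠ 0 := by
  intro h
  simpa [coeff_sum] using congrArg (fun f => f.coeff 1) h

section CommRing

variable {k : Type*} [CommRing k]

theorem ker_lift_one_le {G : Type*} [CommMonoid G] {I : Ideal (MonoidAlgebra k G)}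
    (hI : ∀ a, single a (1 : k) - 1 ∈ I) : RingHom.ker (lift k k G 1) ≤ I := by
  have hmk : Ideal.Quotient.mkₐ k I = (Algebra.ofId k _).comp (lift k k G 1) :=
    algHom_ext (fun a => by simpa using Ideal.Quotient.eq.2 (hI a)) (Subsingleton.elim _ _)
  intro f hf
  rw [← Ideal.Quotient.eq_zero_iff_mem, ← Ideal.Quotient.mkₐ_eq_mk k, hmk, AlgHom.comp_apply,
    RingHom.mem_ker.1 hf, map_zero]

variable {ι : Type*} [DecidableEq ι] [Fintype ι] (q : ι → ℕ)

open PiZMod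

theorem span_single_gen_sub_one_eq_ker_lift [∀ i, NeZero (q i)] :
    Ideal.span (Set.range fun i => single (gen q i) (1 : k) - 1) =
      RingHom.ker (lift k k (PiZMod q) 1) := by
  set I := Ideal.span (Set.range fun i => single (gen q i) (1 : k) - 1)
  refine le_antisymm (Ideal.span_le.2 (Set.range_subset_iff.2 fun i => ?_)) (ker_lift_one_le ?_)
  · simp [lift_single]
  · have hgen : ∀ i, Ideal.Quotient.mk I (of k _ (gen q i)) = 1 := fun i => by
      have : single (gen q i) (1 : k) - 1 ∈ I := Ideal.subset_span (Set.mem_range_self i)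
      simpa using Ideal.Quotient.eq.2 this
    intro a
    rw [← Ideal.Quotient.eq, map_one, ← of_apply, ← prod_gen_pow_val q a, map_prod, map_prod]
    simp only [map_pow, hgen, one_pow, prod_const_one]

theorem prod_geom_sum_single_gen [∀ i, NeZero (q i)] :
    ∏ i, ∑ j ∈ range (q i), single (gen q i) (1 : k) ^ j = ∑ a : PiZMod q, single a 1 := by
  rw [prod_univ_sum]
  refine sum_nbij' (fun e => Multiplicative.ofAdd fun i => (e i : ZMod (q i)))
    (fun a i => (Multiplicative.toAdd a i).val) (by simp) (by simp [ZMod.val_lt]) ?_ (by simp) ?_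
  · intro e he
    funext i
    exact ZMod.val_natCast_of_lt (mem_range.1 (Fintype.mem_piFinset.1 he i))
  · intro e _
    simp [single_pow, prod_gen_pow]

end CommRing

section CharP

variable {k : Type*} [CommRing k] {ι : Type*} [DecidableEq ι]
  (p : ℕ) [Fact p.Prime] [CharP k p] (r : ι → ℕ)

open PiZMod

theorem single_gen_sub_one_pow_eq_zero (i : ι) :
    (single (gen (fun i => p ^ r i) i) (1 : k) - 1) ^ p ^ r i = 0 := by
  rw [sub_pow_char_pow, single_pow, gen_pow_self, one_pow, one_pow, ← one_def, sub_self]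

theorem prod_single_gen_sub_one_pow_ne_zero [Nontrivial k] [Fintype ι] :
    ∏ i, (single (gen (fun i => p ^ r i) i) (1 : k) - 1) ^ (p ^ r i - 1) ≠ 0 := by
  simp only [sub_one_pow_prime_pow_sub_one p]
  rw [prod_geom_sum_single_gen]
  exact sum_single_one_ne_zero

end CharP

open PiZMod in
theorem jacobson_bot_eq_span_single_gen_sub_one {k : Type*} [Field k] {ι : Type*}
    [DecidableEq ι] [Fintype ι] (p : ℕ) [Fact p.Prime] [CharP k p] (r : ι → ℕ) :
    Ideal.jacobson (⊥ : Ideal (MonoidAlgebra k (PiZMod fun i => p ^ r i))) =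
      Ideal.span (Set.range fun i => single (gen (fun i => p ^ r i) i) (1 : k) - 1) := by
  have : (Ideal.span (Set.range fun i =>
      single (gen (fun i => p ^ r i) i) (1 : k) - 1)).IsMaximal := by
    rw [span_single_gen_sub_one_eq_ker_lift]
    exact RingHom.ker_isMaximal_of_surjective _ fun c => ⟨single 1 c, by simp [lift_single]⟩
  refine Ideal.jacobson_bot_eq_of_le_nilradical
    (Ideal.span_le.2 (Set.range_subset_iff.2 fun i => ?_))
  exact mem_nilradical.2 ⟨_, single_gen_sub_one_pow_eq_zero p r i⟩

end MonoidAlgebra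

theorem radical_length_tensor_of_cyclics_general (p : ℕ) [Fact p.Prime] (k : Type*) [Field k]
    [CharP k p] (l : ℕ) (r n : Fin l → ℕ)
    (hn₁ : ∀ i, 1 ≤ n i) (hn₂ : ∀ i, n i ≤ p ^ r i) :
    letI A := Multiplicative (∀ i : Fin l, ZMod (p ^ r i))
    letI g : Fin l → A := fun i => Multiplicative.ofAdd (Pi.single i (1 : ZMod (p ^ r i)))
    letI I : Ideal (MonoidAlgebra k A) :=
      Ideal.span (Set.range (fun i => ((single (g i) (1 : k) : MonoidAlgebra k A) - 1) ^ n i))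
    letI J := Ideal.jacobson (⊥ : Ideal (MonoidAlgebra k A))
    letI m := ∑ i, (n i - 1)
    (J ^ m) • (⊤ : Submodule (MonoidAlgebra k A) (MonoidAlgebra k A ⧸ I)) ≠ ⊥ ∧
    (J ^ (m + 1)) • (⊤ : Submodule (MonoidAlgebra k A) (MonoidAlgebra k A ⧸ I)) = ⊥ := by
  set x : Fin l → MonoidAlgebra k (PiZMod fun i => p ^ r i) :=
    fun i => single (PiZMod.gen (fun i => p ^ r i) i) 1 - 1
  have hn : ∀ i, n i - 1 + 1 = n i := fun i => Nat.sub_add_cancel (hn₁ i)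
  have hq : ∀ i, p ^ r i - 1 + 1 = p ^ r i := fun i => Nat.sub_add_cancel NeZero.one_le
  dsimp only
  rw [Ne, Ideal.smul_top_quotient_eq_bot_iff, Ideal.smul_top_quotient_eq_bot_iff,
    MonoidAlgebra.jacobson_bot_eq_span_single_gen_sub_one]
  constructor
  · have hsocle : ∏ i, x i ^ (n i - 1) ∉ Ideal.span (Set.range fun i => x i ^ n i) := by
      have := Ideal.prod_pow_notMem_span_range_pow_succ x (n := fun i => n i - 1)
        (by simpa only [hq] using MonoidAlgebra.single_gen_sub_one_pow_eq_zero p r)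
        (MonoidAlgebra.prod_single_gen_sub_one_pow_ne_zero p r)
        (fun i => Nat.sub_le_sub_right (hn₂ i) 1)
      simpa only [hn] using this
    exact fun h => hsocle (h (Ideal.prod_pow_mem_span_range_pow_sum x _))
  · have hpigeon := Ideal.span_range_pow_sum_add_one_le x fun i => n i - 1
    simp only [hn] at hpigeon
    exact hpigeon

/-- Let `A = C_{p^{r₁}} × ⋯ × C_{p^{r_l}}` be an abelian `p`-group over a field `k` of
characteristic `p`, with `gᵢ` a generator of the `i`-th factor, and let
`M = M₁ ⊗ ⋯ ⊗ M_l ≅ kA / ((g₁-1)^{n₁}, …, (g_l-1)^{n_l})` where `Mᵢ = kC_{p^{rᵢ}}/(gᵢ-1)^{nᵢ}`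
is the indecomposable of dimension `nᵢ`.  Then `M` has radical length exactly
`1 + (n₁ - 1) + ⋯ + (n_l - 1)`. -/
theorem radical_length_tensor_of_cyclics (p : ℕ) [Fact p.Prime] (k : Type*) [Field k]
    [CharP k p] (l : ℕ) (r n : Fin l → ℕ) (hr : ∀ i, 1 ≤ r i)
    (hn₁ : ∀ i, 1 ≤ n i) (hn₂ : ∀ i, n i ≤ p ^ r i) :
    letI A := Multiplicative (∀ i : Fin l, ZMod (p ^ r i))
    letI g : Fin l → A := fun i => Multiplicative.ofAdd (Pi.single i (1 : ZMod (p ^ r i)))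
    letI I : Ideal (MonoidAlgebra k A) :=
      Ideal.span (Set.range (fun i => ((single (g i) (1 : k) : MonoidAlgebra k A) - 1) ^ n i))
    letI J := Ideal.jacobson (⊥ : Ideal (MonoidAlgebra k A))
    letI m := ∑ i, (n i - 1)
    (J ^ m) • (⊤ : Submodule (MonoidAlgebra k A) (MonoidAlgebra k A ⧸ I)) ≠ ⊥ ∧
    (J ^ (m + 1)) • (⊤ : Submodule (MonoidAlgebra k A) (MonoidAlgebra k A ⧸ I)) = ⊥ :=
  radical_length_tensor_of_cyclics_general p k l r n hn₁ hn₂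
end

section
/- Let k be a field of characteristic 2, q a power of 2, and D_{4q} = ⟨x, y ∣ x² = y² = 1, (xy)^q = (yx)^q⟩ the dihedral 2-group of order 4q. Writing X = x − 1 and Y = y − 1 in kD_{4q}, there is a k-algebra isomorphism kD_{4q} ≅ Λ/((XY)^q − (YX)^q), where Λ = k⟨X, Y⟩/(X², Y²) is the quotient of the free associative algebra on two non-commuting variables. -/
open MonoidAlgebra

/-- The defining relations of `Λ/((XY)^q - (YX)^q)` where `Λ = k⟨X,Y⟩/(X², Y²)`:
`X² = 0`, `Y² = 0` and `(XY)^q = (YX)^q`, imposed on the free algebra on two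
non-commuting variables `X` (index `0`) and `Y` (index `1`). -/
inductive DihedralRel (k : Type*) [CommRing k] (q : ℕ) :
    FreeAlgebra k (Fin 2) → FreeAlgebra k (Fin 2) → Prop
  | x_sq : DihedralRel k q (FreeAlgebra.ι k (0 : Fin 2) * FreeAlgebra.ι k (0 : Fin 2)) 0
  | y_sq : DihedralRel k q (FreeAlgebra.ι k (1 : Fin 2) * FreeAlgebra.ι k (1 : Fin 2)) 0
  | comm : DihedralRel k q ((FreeAlgebra.ι k (0 : Fin 2) * FreeAlgebra.ι k (1 : Fin 2)) ^ q)
      ((FreeAlgebra.ι k (1 : Fin 2) * FreeAlgebra.ι k (0 : Fin 2)) ^ q)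

/-!
Put `x = 1 + X` and `y = 1 + Y`. In characteristic `2`, `X² = 0` says exactly that `x` is an
involution, and `(XY)^q + (YX)^q = (xy + yx)^q = (xy)^q + (yx)^q` since `q` is a power of `2` and
both pairs commute (`XY·YX = 0 = YX·XY`, `xy·yx = 1 = yx·xy`). So the relations of the quotient
become `x² = y² = 1`, `(xy)^q = (yx)^q`, i.e. `(xy)^{2q} = 1`: the Coxeter presentation of the
dihedral group of order `4q`. The two universal properties then give mutually inverse algebra maps.
-/

section CharTwo

variable {S : Type*} [Ring S]

theorem add_eq_zero_iff_eq_of_two_eq_zero (h2 : (2 : S) = 0) {a b : S} : a + b = 0 ↔ a = b := by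
  rw [show a + b = a - b + 2 * b by noncomm_ring, h2, zero_mul, add_zero, sub_eq_zero]

theorem Commute.add_pow_two_pow_of_two_eq_zero (h2 : (2 : S) = 0) {a b : S} (h : Commute a b)
    (m : ℕ) : (a + b) ^ 2 ^ m = a ^ 2 ^ m + b ^ 2 ^ m := by
  rw [h.add_pow_prime_pow_eq Nat.prime_two, Nat.cast_ofNat, h2]
  simp only [zero_mul, add_zero]

theorem sub_one_mul_self_eq_zero_of_two_eq_zero (h2 : (2 : S) = 0) {x : S} (hx : x * x = 1) :
    (x - 1) * (x - 1) = 0 := by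
  rw [show (x - 1) * (x - 1) = x * x - 2 * x + 1 by noncomm_ring, hx, h2, zero_mul, sub_zero,
    one_add_one_eq_two, h2]

theorem one_add_mul_self_eq_one_of_two_eq_zero (h2 : (2 : S) = 0) {X : S} (hX : X * X = 0) :
    (1 + X) * (1 + X) = 1 := by
  rw [show (1 + X) * (1 + X) = 1 + 2 * X + X * X by noncomm_ring, hX, h2, zero_mul, add_zero,
    add_zero]

theorem sub_one_mul_sub_one_pow_two_pow_eq_iff (h2 : (2 : S) = 0) {x y : S} (hx : x * x = 1)
    (hy : y * y = 1) (m : ℕ) :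
    ((x - 1) * (y - 1)) ^ 2 ^ m = ((y - 1) * (x - 1)) ^ 2 ^ m ↔
      (x * y) ^ 2 ^ m = (y * x) ^ 2 ^ m := by
  have hX := sub_one_mul_self_eq_zero_of_two_eq_zero h2 hx
  have hY := sub_one_mul_self_eq_zero_of_two_eq_zero h2 hy
  have hXY : Commute ((x - 1) * (y - 1)) ((y - 1) * (x - 1)) := by
    have hXYYX : (x - 1) * (y - 1) * ((y - 1) * (x - 1)) = 0 := by
      rw [mul_assoc, ← mul_assoc (y - 1), hY, zero_mul, mul_zero]
    have hYXXY : (y - 1) * (x - 1) * ((x - 1) * (y - 1)) = 0 := by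
      rw [mul_assoc, ← mul_assoc (x - 1), hX, zero_mul, mul_zero]
    exact hXYYX.trans hYXXY.symm
  have hxy : Commute (x * y) (y * x) := by
    rw [Commute, SemiconjBy, mul_assoc, ← mul_assoc y, hy, one_mul, hx, mul_assoc, ← mul_assoc x,
      hx, one_mul, hy]
  have hsum : (x - 1) * (y - 1) + (y - 1) * (x - 1) = x * y + y * x := by
    rw [show (x - 1) * (y - 1) + (y - 1) * (x - 1) = x * y + y * x + 2 * (1 - x - y) by
      noncomm_ring, h2, zero_mul, add_zero]
  refine (add_eq_zero_iff_eq_of_two_eq_zero h2).symm.trans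
    (Iff.trans ?_ (add_eq_zero_iff_eq_of_two_eq_zero h2))
  rw [← hXY.add_pow_two_pow_of_two_eq_zero h2, ← hxy.add_pow_two_pow_of_two_eq_zero h2, hsum]

theorem two_eq_zero_of_charP_two (k : Type*) {B : Type*} [CommSemiring k] [CharP k 2]
    [Semiring B] [Algebra k B] : (2 : B) = 0 := by
  rw [← map_ofNat (algebraMap k B) 2, CharTwo.two_eq_zero, map_zero]

end CharTwo

section ZModPow

variable {M : Type*} [Monoid M] {n : ℕ} [NeZero n] {u : M}

theorem pow_zmod_val_add (hu : u ^ n = 1) (i j : ZMod n) :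
    u ^ (i + j).val = u ^ i.val * u ^ j.val := by
  rw [ZMod.val_add, ← pow_eq_pow_mod _ hu, pow_add]

theorem pow_zmod_val_sub (hu : u ^ n = 1) {v : M} (hvu : v * u = 1) (i j : ZMod n) :
    u ^ (j - i).val = v ^ i.val * u ^ j.val := by
  symm
  rw [← sub_add_cancel j i, pow_zmod_val_add hu, add_sub_cancel_right,
    (Commute.pow_pow_self u _ _).eq, ← mul_assoc, pow_mul_pow_eq_one _ hvu, one_mul]

end ZModPow

theorem mul_pow_two_mul_eq_one {M : Type*} [Monoid M] {x y : M} (hx : x * x = 1) (hy : y * y = 1)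
    {n : ℕ} (h : (x * y) ^ n = (y * x) ^ n) : (x * y) ^ (2 * n) = 1 := by
  rw [two_mul, pow_add]
  nth_rw 2 [h]
  refine pow_mul_pow_eq_one n ?_
  rw [mul_assoc, ← mul_assoc y, hy, one_mul, hx]

namespace DihedralGroup

variable {n : ℕ} {M : Type*} [Monoid M]

def lift [NeZero n] (x y : M) (hx : x * x = 1) (hy : y * y = 1) (hxy : (x * y) ^ n = 1) :
    DihedralGroup n →* M where
  toFun
    | r i => (x * y) ^ i.val
    | sr i => x * (x * y) ^ i.val
  map_one' := by
    show (x * y) ^ (0 : ZMod n).val = 1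
    rw [ZMod.val_zero, pow_zero]
  map_mul' := by
    have hyx : y * x * (x * y) = 1 := by rw [mul_assoc, ← mul_assoc x, hx, one_mul, hy]
    have hconj (i : ZMod n) : (x * y) ^ i.val * x = x * (y * x) ^ i.val :=
      ((show SemiconjBy x (y * x) (x * y) from (mul_assoc x y x).symm).pow_right i.val).symm
    rintro (i | i) (j | j)
    · exact pow_zmod_val_add hxy i j
    · simp only [r_mul_sr]
      rw [← mul_assoc, hconj, mul_assoc, ← pow_zmod_val_sub hxy hyx]
    · simp only [sr_mul_r]
      rw [pow_zmod_val_add hxy, mul_assoc]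
    · simp only [sr_mul_sr]
      rw [mul_assoc, ← mul_assoc _ x, hconj, ← mul_assoc, ← mul_assoc, hx, one_mul,
        ← pow_zmod_val_sub hxy hyx]

section lift

variable [NeZero n] {x y : M} (hx : x * x = 1) (hy : y * y = 1) (hxy : (x * y) ^ n = 1)

@[simp]
theorem lift_sr_zero : lift x y hx hy hxy (sr 0) = x := by
  show x * (x * y) ^ (0 : ZMod n).val = x
  rw [ZMod.val_zero, pow_zero, mul_one]

@[simp]
theorem lift_sr_one : lift x y hx hy hxy (sr 1) = y := by
  show x * (x * y) ^ (1 : ZMod n).val = y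
  rw [ZMod.val_one_eq_one_mod, ← pow_eq_pow_mod _ hxy, pow_one, ← mul_assoc, hx, one_mul]

end lift

theorem hom_ext [NeZero n] {f g : DihedralGroup n →* M} (h0 : f (sr 0) = g (sr 0))
    (h1 : f (sr 1) = g (sr 1)) : f = g := by
  have hr : f (r 1) = g (r 1) := by
    rw [← sub_zero (1 : ZMod n), ← sr_mul_sr, map_mul, map_mul, h0, h1]
  ext (i | i)
  · rw [← ZMod.natCast_zmod_val i, ← r_one_pow, map_pow, map_pow, hr]
  · rw [← zero_add i, ← sr_mul_r, map_mul, map_mul, h0, ← ZMod.natCast_zmod_val i, ← r_one_pow,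
      map_pow, map_pow, hr]

theorem sr_zero_mul_sr_one_pow_eq (q : ℕ) :
    (sr 0 * sr 1 : DihedralGroup (2 * q)) ^ q = (sr 1 * sr 0) ^ q := by
  have hq : ((q : ℕ) : ZMod (2 * q)) = -q := by
    rw [eq_neg_iff_add_eq_zero, ← two_mul]
    exact_mod_cast ZMod.natCast_self (2 * q)
  rw [sr_mul_sr, sr_mul_sr, r_pow, r_pow, sub_zero, zero_sub, one_mul, neg_one_mul]
  exact congrArg r hq

end DihedralGroup

namespace DihedralRel

variable (k : Type*) [CommRing k] (q : ℕ)

abbrev X : RingQuot (DihedralRel k q) := RingQuot.mkAlgHom k (DihedralRel k q) (FreeAlgebra.ι k 0)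

abbrev Y : RingQuot (DihedralRel k q) := RingQuot.mkAlgHom k (DihedralRel k q) (FreeAlgebra.ι k 1)

theorem X_mul_self : X k q * X k q = 0 := by
  simpa only [map_mul, map_zero] using RingQuot.mkAlgHom_rel k (x_sq (k := k) (q := q))

theorem Y_mul_self : Y k q * Y k q = 0 := by
  simpa only [map_mul, map_zero] using RingQuot.mkAlgHom_rel k (y_sq (k := k) (q := q))

theorem X_mul_Y_pow : (X k q * Y k q) ^ q = (Y k q * X k q) ^ q := by
  simpa only [map_mul, map_pow] using RingQuot.mkAlgHom_rel k (comm (k := k) (q := q))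

variable {k q} {B : Type*} [Semiring B] [Algebra k B]

def liftAlgHom (a b : B) (ha : a * a = 0) (hb : b * b = 0) (hab : (a * b) ^ q = (b * a) ^ q) :
    RingQuot (DihedralRel k q) →ₐ[k] B :=
  RingQuot.liftAlgHom k ⟨FreeAlgebra.lift k ![a, b], fun _ _ h => by
    cases h <;> simp [ha, hb, hab]⟩

section liftAlgHom

variable {a b : B} (ha : a * a = 0) (hb : b * b = 0) (hab : (a * b) ^ q = (b * a) ^ q)

@[simp]
theorem liftAlgHom_X : liftAlgHom a b ha hb hab (X k q) = a := by
  simp [liftAlgHom]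

@[simp]
theorem liftAlgHom_Y : liftAlgHom a b ha hb hab (Y k q) = b := by
  simp [liftAlgHom]

end liftAlgHom

theorem algHom_ext {f g : RingQuot (DihedralRel k q) →ₐ[k] B} (hX : f (X k q) = g (X k q))
    (hY : f (Y k q) = g (Y k q)) : f = g :=
  RingQuot.ringQuot_ext' k f g <| FreeAlgebra.hom_ext <| funext fun i => by
    fin_cases i
    exacts [hX, hY]

end DihedralRel

/-- Let `k` be a field of characteristic `2` and `q` a power of `2`.  Then there is a
`k`-algebra isomorphism `Λ/((XY)^q - (YX)^q) ≅ kD_{4q}` (with `D_{4q}` the dihedral group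
of order `4q`) sending `X ↦ x - 1` and `Y ↦ y - 1`, where `x, y` are the two generating
reflections. -/
theorem dihedral_group_algebra_iso (k : Type*) [Field k] [CharP k 2] (q : ℕ)
    (hq : ∃ m : ℕ, q = 2 ^ m) :
    ∃ e : RingQuot (DihedralRel k q) ≃ₐ[k] MonoidAlgebra k (DihedralGroup (2 * q)),
      e (RingQuot.mkAlgHom k (DihedralRel k q) (FreeAlgebra.ι k (0 : Fin 2))) =
        single (DihedralGroup.sr (0 : ZMod (2 * q))) (1 : k) - 1 ∧
      e (RingQuot.mkAlgHom k (DihedralRel k q) (FreeAlgebra.ι k (1 : Fin 2))) =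
        single (DihedralGroup.sr (1 : ZMod (2 * q))) (1 : k) - 1 := by
  obtain ⟨m, rfl⟩ := hq
  have h2A : (2 : MonoidAlgebra k (DihedralGroup (2 * 2 ^ m))) = 0 := two_eq_zero_of_charP_two k
  have h2R : (2 : RingQuot (DihedralRel k (2 ^ m))) = 0 := two_eq_zero_of_charP_two k
  have hxA : of k _ (.sr 0) * of k (DihedralGroup (2 * 2 ^ m)) (.sr 0) = 1 := by
    rw [← map_mul, DihedralGroup.sr_mul_self, map_one]
  have hyA : of k _ (.sr 1) * of k (DihedralGroup (2 * 2 ^ m)) (.sr 1) = 1 := by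
    rw [← map_mul, DihedralGroup.sr_mul_self, map_one]
  have hxyA := congrArg (of k _) (DihedralGroup.sr_zero_mul_sr_one_pow_eq (2 ^ m))
  simp only [map_mul, map_pow] at hxyA
  let f := DihedralRel.liftAlgHom (k := k) _ _ (sub_one_mul_self_eq_zero_of_two_eq_zero h2A hxA)
    (sub_one_mul_self_eq_zero_of_two_eq_zero h2A hyA)
    ((sub_one_mul_sub_one_pow_two_pow_eq_iff h2A hxA hyA m).2 hxyA)
  have hxR := one_add_mul_self_eq_one_of_two_eq_zero h2R (DihedralRel.X_mul_self k _)
  have hyR := one_add_mul_self_eq_one_of_two_eq_zero h2R (DihedralRel.Y_mul_self k _)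
  have hxyR := DihedralRel.X_mul_Y_pow k (2 ^ m)
  rw [← add_sub_cancel_left 1 (DihedralRel.X k _), ← add_sub_cancel_left 1 (DihedralRel.Y k _),
    sub_one_mul_sub_one_pow_two_pow_eq_iff h2R hxR hyR] at hxyR
  let φ := DihedralGroup.lift _ _ hxR hyR (mul_pow_two_mul_eq_one hxR hyR hxyR)
  let g := MonoidAlgebra.lift k _ _ φ
  refine ⟨AlgEquiv.ofAlgHom f g ?_ ?_, ?_, ?_⟩
  · have hfφ : (f : _ →* _).comp φ = of k _ :=
      DihedralGroup.hom_ext (by simp [f, φ]) (by simp [f, φ])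
    exact MonoidAlgebra.algHom_ext (fun w => by simpa [g] using DFunLike.congr_fun hfφ w)
      (Subsingleton.elim _ _)
  · exact DihedralRel.algHom_ext (by simp [f, g, φ]) (by simp [f, g, φ])
  · simp [f]
  · simp [f]
end

section
/- Let k be a field of characteristic 2 and G a group containing elements x, y with x² = y² = 1. Writing X = x − 1 and Y = y − 1 in kG, for every r that is a power of 2 one has (XY)^r − (YX)^r = (xy)^r − (yx)^r in kG. -/
open MonoidAlgebra

/-- Let `k` be a field of characteristic `2`, `G` a group, and `x, y ∈ G` with
`x² = y² = 1`.  Writing `X = x - 1` and `Y = y - 1` in `kG`, for every `r` a power of `2`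
one has `(XY)^r - (YX)^r = (xy)^r - (yx)^r` in `kG`. -/
theorem pow_two_pow_comm_identity (k : Type*) [Field k] [CharP k 2]
    (G : Type*) [Group G] (x y : G) (hx : x ^ 2 = 1) (hy : y ^ 2 = 1)
    (r : ℕ) (hr : ∃ m : ℕ, r = 2 ^ m) :
    ((single x (1 : k) - 1) * (single y (1 : k) - 1)) ^ r -
      ((single y (1 : k) - 1) * (single x (1 : k) - 1)) ^ r =
    (single ((x * y) ^ r) (1 : k) : MonoidAlgebra k G) - single ((y * x) ^ r) (1 : k) := by
  have h2k : (2 : k) = 0 := by simpa using (CharP.cast_eq_zero k 2)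
  have hdbl : ∀ a : MonoidAlgebra k G, a + a = 0 := fun a => by
    rw [← two_smul k a, h2k, zero_smul]
  have hneg : ∀ a : MonoidAlgebra k G, -a = a := fun a =>
    neg_eq_of_add_eq_zero_left (hdbl a)
  have hxx : x * x = 1 := by rw [← sq]; exact hx
  have hyy : y * y = 1 := by rw [← sq]; exact hy
  have hcancel : ∀ (u v : G), u * u = 1 → v * v = 1 →
      ∀ n : ℕ, (u * v) ^ n * (v * u) ^ n = 1 := by
    intro u v hu hv n
    induction n with
    | zero => simp
    | succ n ih =>
      have h1 : (u * v) * (v * u) = 1 := by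
        rw [mul_assoc u v, ← mul_assoc v v, hv, one_mul, hu]
      rw [pow_succ, pow_succ', mul_assoc, ← mul_assoc (u * v), h1, one_mul, ih]
  have key : ∀ (A B : MonoidAlgebra k G), A * B = 0 →
      ∀ s : ℕ, A ^ (s + 1) * B ^ (s + 1) = 0 := by
    intro A B h s
    rw [pow_succ, pow_succ', mul_assoc, ← mul_assoc A B, h, zero_mul, mul_zero]
  set X : MonoidAlgebra k G := single x (1 : k) - 1 with hXdef
  set Y : MonoidAlgebra k G := single y (1 : k) - 1 with hYdef
  have hsx : single x (1 : k) * single x (1 : k) = (1 : MonoidAlgebra k G) := by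
    rw [single_mul_single, one_mul, hxx, ← one_def]
  have hsy : single y (1 : k) * single y (1 : k) = (1 : MonoidAlgebra k G) := by
    rw [single_mul_single, one_mul, hyy, ← one_def]
  have hX2 : X * X = 0 := by
    have e : X * X = (single x (1 : k) * single x (1 : k) + 1) -
        (single x (1 : k) + single x (1 : k)) := by rw [hXdef]; noncomm_ring
    rw [e, hsx, hdbl, hdbl, sub_zero]
  have hY2 : Y * Y = 0 := by
    have e : Y * Y = (single y (1 : k) * single y (1 : k) + 1) -
        (single y (1 : k) + single y (1 : k)) := by rw [hYdef]; noncomm_ring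
    rw [e, hsy, hdbl, hdbl, sub_zero]
  have hXYYX : (X * Y) * (Y * X) = 0 := by
    rw [mul_assoc X Y, ← mul_assoc Y Y, hY2, zero_mul, mul_zero]
  have hYXXY : (Y * X) * (X * Y) = 0 := by
    rw [mul_assoc Y X, ← mul_assoc X X, hX2, zero_mul, mul_zero]
  obtain ⟨m, rfl⟩ := hr
  induction m with
  | zero =>
    simp only [pow_zero, pow_one]
    have e : X * Y - Y * X =
        single x (1 : k) * single y (1 : k) - single y (1 : k) * single x (1 : k) := by
      rw [hXdef, hYdef]; noncomm_ring
    rw [e, single_mul_single, single_mul_single, one_mul]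
  | succ n ih =>
    obtain ⟨s, hs⟩ : ∃ s, 2 ^ n = s + 1 :=
      ⟨2 ^ n - 1, by have := Nat.one_le_two_pow (n := n); omega⟩
    rw [pow_succ 2 n]
    simp only [pow_mul]
    set A : MonoidAlgebra k G := (X * Y) ^ 2 ^ n with hA
    set B : MonoidAlgebra k G := (Y * X) ^ 2 ^ n with hB
    set a : G := (x * y) ^ 2 ^ n with ha
    set b : G := (y * x) ^ 2 ^ n with hb
    have hAB : A * B = 0 := by rw [hA, hB, hs]; exact key _ _ hXYYX s
    have hBA : B * A = 0 := by rw [hA, hB, hs]; exact key _ _ hYXXY s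
    have hab : a * b = 1 := hcancel x y hxx hyy _
    have hba : b * a = 1 := hcancel y x hyy hxx _
    have hsab : single a (1 : k) * single b (1 : k) = (1 : MonoidAlgebra k G) := by
      rw [single_mul_single, one_mul, hab, ← one_def]
    have hsba : single b (1 : k) * single a (1 : k) = (1 : MonoidAlgebra k G) := by
      rw [single_mul_single, one_mul, hba, ← one_def]
    have e1 : A ^ 2 - B ^ 2 = (A - B) * (A - B) := by
      have e : (A - B) * (A - B) = (A ^ 2 + B ^ 2) - (A * B + B * A) := by noncomm_ring
      rw [e, hAB, hBA, add_zero, sub_zero, sub_eq_add_neg, hneg]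
    rw [e1, ih]
    have e2 : (single a (1 : k) - single b (1 : k)) * (single a (1 : k) - single b (1 : k)) =
        (single a (1 : k) * single a (1 : k) + single b (1 : k) * single b (1 : k)) -
        (single a (1 : k) * single b (1 : k) + single b (1 : k) * single a (1 : k)) := by
      noncomm_ring
    rw [e2, hsab, hsba, hdbl, sub_zero, single_mul_single, single_mul_single, one_mul,
      ← sq, ← sq, sub_eq_add_neg, hneg]
end

section
/- Let G = C_{p^r} × C_{p^s} with p^s ≥ 3, k a field of characteristic p, x, y generators of the cyclic factors, and X = x − 1, Y = y − 1 in kG. Set l = p^r + p^s − 4, and for a kG-module M let soc^l(M) = {m ∈ M : J(kG)^l · m = 0}. If z₀, z₂, z₄ ∈ M satisfy Y·z₀ − X·z₂ ∈ soc^l(M) and Y·z₂ − X·z₄ ∈ soc^l(M), then X·z₀ ∈ soc^l(M) and X·z₂ ∈ soc^l(M). -/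
/-!
The Jacobson radical of `kG` is the augmentation ideal `(X, Y)`: it is the kernel of the
augmentation, hence maximal, and it is generated by nilpotents, since `X ^ p^r = x ^ p^r - 1 = 0`
in characteristic `p`. So `soc^l(M)` consists of the elements killed by all monomials `X^i Y^j`
of degree `l`.

Write `p^r = a + 2`, `p^s = b + 3`, so `l = a + b + 1`. Of the monomials of degree `l + 1`, only
`X^(a+1) Y^(b+1)` and `X^a Y^(b+2)` are nonzero. Trading a factor `Y` for a factor `X` through
the relations `Y z₀ ≡ X z₂` and `Y z₂ ≡ X z₄` modulo `soc^l(M)` raises the power of `X` to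
`a + 2`, so both monomials kill `z₀`. Thus `z₀ ∈ soc^(l+1)(M)`, whence `X z₀, Y z₀ ∈ soc^l(M)`,
and `X z₂ ≡ Y z₀` lies there too.
-/

open Submodule

section Socle

variable {R M : Type*} [CommRing R] [AddCommGroup M] [Module R M]

theorem Submodule.mem_torsionBySet_mul_iff {I J : Ideal R} {m : M} :
    m ∈ torsionBySet R M ↑(I * J) ↔ ∀ j ∈ J, j • m ∈ torsionBySet R M ↑I := by
  simp only [mem_torsionBySet_iff, Subtype.forall, SetLike.mem_coe]
  refine ⟨fun h j hj i hi => ?_, fun h f hf => ?_⟩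
  · rw [smul_smul]
    exact h _ (Ideal.mul_mem_mul hi hj)
  · refine Submodule.mul_induction_on hf (fun i hi j hj => ?_) (fun f g hf hg => ?_)
    · rw [mul_smul]
      exact h j hj i hi
    · rw [add_smul, hf, hg, add_zero]

theorem Submodule.smul_eq_smul_of_sub_mem_torsionBySet {s : Set R} {c : R} (hc : c ∈ s)
    {u v : M} (h : u - v ∈ torsionBySet R M s) : c • u = c • v := by
  rw [← sub_eq_zero, ← smul_sub]
  exact (mem_torsionBySet_iff _ _).1 h ⟨c, hc⟩

variable {X Y : R}

theorem Submodule.mem_torsionBySet_span_pair_pow_of_monomials {n : ℕ} {m : M}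
    (h : ∀ i j, i + j = n → (X ^ i * Y ^ j) • m = 0) :
    m ∈ torsionBySet R M ↑(Ideal.span {X, Y} ^ n) := by
  induction n generalizing m with
  | zero =>
    have hm : m = 0 := by simpa using h 0 0 rfl
    simp [hm]
  | succ n ih =>
    rw [pow_succ, mem_torsionBySet_mul_iff]
    have hX : X • m ∈ torsionBySet R M ↑(Ideal.span {X, Y} ^ n) :=
      ih fun i j hij => by rw [smul_smul, ← h (i + 1) j (by omega)]; ring_nf
    have hY : Y • m ∈ torsionBySet R M ↑(Ideal.span {X, Y} ^ n) :=
      ih fun i j hij => by rw [smul_smul, ← h i (j + 1) (by omega)]; ring_nf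
    intro f hf
    obtain ⟨u, v, rfl⟩ := Ideal.mem_span_pair.1 hf
    rw [add_smul, mul_smul, mul_smul]
    exact add_mem (smul_mem _ u hX) (smul_mem _ v hY)

theorem mem_torsionBySet_span_pair_pow_of_relations {a b : ℕ} (hX : X ^ (a + 2) = 0)
    (hY : Y ^ (b + 3) = 0) {z₀ z₂ z₄ : M}
    (h₀₂ : Y • z₀ - X • z₂ ∈ torsionBySet R M ↑(Ideal.span {X, Y} ^ (a + b + 1)))
    (h₂₄ : Y • z₂ - X • z₄ ∈ torsionBySet R M ↑(Ideal.span {X, Y} ^ (a + b + 1))) :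
    z₀ ∈ torsionBySet R M ↑(Ideal.span {X, Y} ^ (a + b + 2)) := by
  have monomial_mem : ∀ i j, a + b + 1 ≤ i + j →
      X ^ i * Y ^ j ∈ Ideal.span {X, Y} ^ (a + b + 1) :=
    fun i j hij => Ideal.pow_le_pow_right hij (by
      rw [pow_add]
      exact Ideal.mul_mem_mul (Ideal.pow_mem_pow (Ideal.subset_span (by simp)) i)
        (Ideal.pow_mem_pow (Ideal.subset_span (by simp)) j))
  have slide : ∀ {u v : M},
      Y • u - X • v ∈ torsionBySet R M ↑(Ideal.span {X, Y} ^ (a + b + 1)) →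
      ∀ i j, a + b + 1 ≤ i + j → (X ^ i * Y ^ (j + 1)) • u = (X ^ (i + 1) * Y ^ j) • v := by
    intro u v huv i j hij
    have := smul_eq_smul_of_sub_mem_torsionBySet (monomial_mem i j hij) huv
    rwa [smul_smul, smul_smul, mul_assoc, ← pow_succ, mul_right_comm, ← pow_succ] at this
  have hX' : ∀ j (v : M), (X ^ (a + 2) * Y ^ j) • v = 0 := by simp [hX]
  have h₂ : (X ^ (a + 1) * Y ^ (b + 1)) • z₂ = 0 := by
    rw [slide h₂₄ (a + 1) b (by omega), hX']
  have h₀ : (X ^ (a + 1) * Y ^ (b + 1)) • z₀ = 0 := by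
    rw [slide h₀₂ (a + 1) b (by omega), hX']
  have h₀' : (X ^ a * Y ^ (b + 2)) • z₀ = 0 := by
    rw [slide h₀₂ a (b + 1) (by omega), h₂]
  refine mem_torsionBySet_span_pair_pow_of_monomials fun i j hij => ?_
  rcases le_or_gt (a + 2) i with hi | hi
  · rw [pow_eq_zero_of_le hi hX, zero_mul, zero_smul]
  rcases le_or_gt (b + 3) j with hj | hj
  · rw [pow_eq_zero_of_le hj hY, mul_zero, zero_smul]
  obtain ⟨rfl, rfl⟩ | ⟨rfl, rfl⟩ : (i = a + 1 ∧ j = b + 1) ∨ (i = a ∧ j = b + 2) := by omega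
  exacts [h₀, h₀']

theorem smul_mem_torsionBySet_span_pair_pow_of_relations {m n : ℕ} (hm : 2 ≤ m) (hn : 3 ≤ n)
    (hX : X ^ m = 0) (hY : Y ^ n = 0) {z₀ z₂ z₄ : M}
    (h₀₂ : Y • z₀ - X • z₂ ∈ torsionBySet R M ↑(Ideal.span {X, Y} ^ (m + n - 4)))
    (h₂₄ : Y • z₂ - X • z₄ ∈ torsionBySet R M ↑(Ideal.span {X, Y} ^ (m + n - 4))) :
    X • z₀ ∈ torsionBySet R M ↑(Ideal.span {X, Y} ^ (m + n - 4)) ∧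
      X • z₂ ∈ torsionBySet R M ↑(Ideal.span {X, Y} ^ (m + n - 4)) := by
  obtain ⟨a, rfl⟩ := Nat.exists_eq_add_of_le' hm
  obtain ⟨b, rfl⟩ := Nat.exists_eq_add_of_le' hn
  rw [show a + 2 + (b + 3) - 4 = a + b + 1 by omega] at h₀₂ h₂₄ ⊢
  have hz₀ := mem_torsionBySet_span_pair_pow_of_relations hX hY h₀₂ h₂₄
  rw [pow_succ, mem_torsionBySet_mul_iff] at hz₀
  have hYz₀ := hz₀ Y (Ideal.subset_span (by simp))
  refine ⟨hz₀ X (Ideal.subset_span (by simp)), ?_⟩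
  simpa using sub_mem hYz₀ h₀₂

end Socle

open MonoidAlgebra

theorem Ideal.jacobson_bot_eq_span_of_isNilpotent {R : Type*} [CommRing R] {S : Set R}
    (hS : ∀ s ∈ S, IsNilpotent s) (hmax : (Ideal.span S).IsMaximal) :
    (⊥ : Ideal R).jacobson = Ideal.span S :=
  le_antisymm (sInf_le ⟨bot_le, hmax⟩) <| Ideal.span_le.2 fun s hs =>
    Ideal.radical_le_jacobson (mem_nilradical.2 (hS s hs))

namespace MonoidAlgebra

variable {k G : Type*} [CommRing k]

theorem single_one_sub_one_mem_span [Monoid G] {S : Set G} {g : G}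
    (hg : g ∈ Submonoid.closure S) :
    single g (1 : k) - 1 ∈ Ideal.span ((fun s => single s (1 : k) - 1) '' S) := by
  induction hg using Submonoid.closure_induction with
  | mem g hg => exact Ideal.subset_span ⟨g, hg, rfl⟩
  | one => simp [one_def]
  | mul g h _ _ hg hh =>
    have : single (g * h) (1 : k) - 1 = single g 1 * (single h 1 - 1) + (single g 1 - 1) := by
      rw [mul_sub, single_mul_single, mul_one, mul_one]; abel
    rw [this]
    exact add_mem (Ideal.mul_mem_left _ _ hh) hg

theorem ker_lift_one_eq_span [CommMonoid G] {S : Set G} (hS : Submonoid.closure S = ⊤) :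
    RingHom.ker (lift k k G 1) = Ideal.span ((fun s => single s (1 : k) - 1) '' S) := by
  refine le_antisymm (fun f hf => ?_) (Ideal.span_le.2 ?_)
  · have key : ∀ f : MonoidAlgebra k G, f - algebraMap k _ (lift k k G 1 f) ∈
        Ideal.span ((fun s => single s (1 : k) - 1) '' S) := by
      intro f
      induction f using MonoidAlgebra.induction_linear with
      | zero => simp
      | add f g hf hg => simpa [add_sub_add_comm] using add_mem hf hg
      | single g c =>
        have : single g c - algebraMap k _ (lift k k G 1 (single g c)) =
            single 1 c * (single g 1 - 1) := by
          simp [mul_sub, single_mul_single, one_def]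
        rw [this]
        exact Ideal.mul_mem_left _ _ (single_one_sub_one_mem_span (hS ▸ Submonoid.mem_top g))
    simpa [RingHom.mem_ker.1 hf] using key f
  · rintro _ ⟨s, -, rfl⟩
    simp [RingHom.mem_ker, lift_single]

theorem single_one_sub_one_pow_char_pow [CommMonoid G] (p : ℕ) [Fact p.Prime] [CharP k p]
    {g : G} {n : ℕ} (hg : g ^ p ^ n = 1) : (single g (1 : k) - 1) ^ p ^ n = 0 := by
  have : CharP (MonoidAlgebra k G) p :=
    charP_of_injective_algebraMap (fun a b h => single_right_injective (m := (1 : G)) h) p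
  rw [sub_pow_char_pow, single_pow, hg, one_pow, one_pow, ← one_def, sub_self]

end MonoidAlgebra

section ZModProd

variable {m n : ℕ}

theorem ofAdd_one_zero_pow_mul_ofAdd_zero_one_pow [NeZero m] [NeZero n]
    (g : Multiplicative (ZMod m × ZMod n)) :
    Multiplicative.ofAdd ((1 : ZMod m), (0 : ZMod n)) ^ (g.toAdd.1).val *
      Multiplicative.ofAdd ((0 : ZMod m), (1 : ZMod n)) ^ (g.toAdd.2).val = g := by
  rw [← ofAdd_nsmul, ← ofAdd_nsmul, ← ofAdd_add, ← ofAdd_toAdd g]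
  simp [ZMod.natCast_val]

theorem closure_ofAdd_one_zero_ofAdd_zero_one [NeZero m] [NeZero n] :
    Submonoid.closure {Multiplicative.ofAdd ((1 : ZMod m), (0 : ZMod n)),
      Multiplicative.ofAdd ((0 : ZMod m), (1 : ZMod n))} = ⊤ :=
  eq_top_iff.2 fun g _ => ofAdd_one_zero_pow_mul_ofAdd_zero_one_pow g ▸
    mul_mem (pow_mem (Submonoid.subset_closure (by simp)) _)
      (pow_mem (Submonoid.subset_closure (by simp)) _)

theorem ofAdd_one_zero_pow : Multiplicative.ofAdd ((1 : ZMod m), (0 : ZMod n)) ^ m = 1 := by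
  rw [← ofAdd_nsmul, ← ofAdd_zero]
  simp [Prod.ext_iff]

theorem ofAdd_zero_one_pow : Multiplicative.ofAdd ((0 : ZMod m), (1 : ZMod n)) ^ n = 1 := by
  rw [← ofAdd_nsmul, ← ofAdd_zero]
  simp [Prod.ext_iff]

end ZModProd

/-- Let `G = C_{p^r} × C_{p^s}` with `p^s ≥ 3`, over a field `k` of characteristic `p`,
with `X = x - 1`, `Y = y - 1` for generators `x, y`, and `l = p^r + p^s - 4`.  If
`z₀, z₂, z₄` in a `kG`-module `M` satisfy `Y•z₀ - X•z₂ ∈ soc^l(M)` and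
`Y•z₂ - X•z₄ ∈ soc^l(M)` (i.e. these elements are killed by `J(kG)^l`), then
`X•z₀ ∈ soc^l(M)` and `X•z₂ ∈ soc^l(M)`. -/
theorem no_W_shape (p r s : ℕ) [Fact p.Prime] (hr : 1 ≤ r) (hs : 3 ≤ p ^ s)
    (k : Type*) [Field k] [CharP k p]
    (M : Type*) [AddCommGroup M]
    [Module (MonoidAlgebra k (Multiplicative (ZMod (p ^ r) × ZMod (p ^ s)))) M]
    (z₀ z₂ z₄ : M) :
    letI G := Multiplicative (ZMod (p ^ r) × ZMod (p ^ s))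
    letI x : G := Multiplicative.ofAdd ((1 : ZMod (p ^ r)), (0 : ZMod (p ^ s)))
    letI y : G := Multiplicative.ofAdd ((0 : ZMod (p ^ r)), (1 : ZMod (p ^ s)))
    letI X : MonoidAlgebra k G := single x 1 - 1
    letI Y : MonoidAlgebra k G := single y 1 - 1
    letI J := Ideal.jacobson (⊥ : Ideal (MonoidAlgebra k G))
    letI l := p ^ r + p ^ s - 4
    (∀ a ∈ J ^ l, a • (Y • z₀ - X • z₂) = (0 : M)) →
    (∀ a ∈ J ^ l, a • (Y • z₂ - X • z₄) = (0 : M)) →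
    (∀ a ∈ J ^ l, a • (X • z₀) = (0 : M)) ∧ (∀ a ∈ J ^ l, a • (X • z₂) = (0 : M)) := by
  intro h₀₂ h₂₄
  set G := Multiplicative (ZMod (p ^ r) × ZMod (p ^ s))
  set X : MonoidAlgebra k G := single (Multiplicative.ofAdd (1, 0)) 1 - 1
  set Y : MonoidAlgebra k G := single (Multiplicative.ofAdd (0, 1)) 1 - 1
  have hpr : 2 ≤ p ^ r := (Fact.out : p.Prime).one_lt.trans_le (Nat.le_self_pow (by omega) p)
  have : NeZero (p ^ r) := ⟨by positivity⟩
  have : NeZero (p ^ s) := ⟨by positivity⟩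
  have hX : X ^ p ^ r = 0 := single_one_sub_one_pow_char_pow p ofAdd_one_zero_pow
  have hY : Y ^ p ^ s = 0 := single_one_sub_one_pow_char_pow p ofAdd_zero_one_pow
  have hJ : (⊥ : Ideal _).jacobson = Ideal.span {X, Y} := by
    refine Ideal.jacobson_bot_eq_span_of_isNilpotent (by simpa using ⟨⟨_, hX⟩, ⟨_, hY⟩⟩) ?_
    have hker := ker_lift_one_eq_span (k := k) (G := G) closure_ofAdd_one_zero_ofAdd_zero_one
    rw [Set.image_pair] at hker
    rw [← hker]
    exact RingHom.ker_isMaximal_of_surjective _ fun c => ⟨single 1 c, by simp [lift_single]⟩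
  have soc : ∀ (I : Ideal (MonoidAlgebra k G)) (m : M),
      (∀ a ∈ I, a • m = 0) ↔ m ∈ torsionBySet (MonoidAlgebra k G) M I := fun I m => by
    simp only [mem_torsionBySet_iff, Subtype.forall, SetLike.mem_coe]
  rw [hJ] at h₀₂ h₂₄ ⊢
  obtain ⟨hXz₀, hXz₂⟩ := smul_mem_torsionBySet_span_pair_pow_of_relations hpr hs hX hY
    ((soc _ _).1 h₀₂) ((soc _ _).1 h₂₄)
  exact ⟨(soc _ _).2 hXz₀, (soc _ _).2 hXz₂⟩
end
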